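/- arXiv:1902.08825 — 10 statements merged into one kernel-verified Lean document; each statement's English description precedes it below -/
import Mathlib

section
/- Let f : X → ℝ be differentiable on a finite-dimensional normed space, with infimum attained at x*. Suppose a sequence (x_k) satisfies f(x_{k+1}) - f(x_k) ≤ -δ‖∇f(x_k)‖^{p/(p-1)} for all k ≥ 0, where δ > 0 and 1 < p < ∞. Then for every k ≥ 1, min_{0 ≤ s ≤ k} ‖∇f(x_s)‖ ≤ ((f(x_0) - f(x*))/(δ k))^{(p-1)/p}. -/
open Real

theorem descent_gradient_min_bound
    {X : Type*} [NormedAddCommGroup X] [InnerProductSpace ℝ X] [FiniteDimensional ℝ X]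
    (f : X → ℝ) (hf : Differentiable ℝ f)
    (xstar : X) (hmin : ∀ y, f xstar ≤ f y)
    (p δ : ℝ) (hp : 1 < p) (hδ : 0 < δ)
    (x : ℕ → X)
    (hdesc : ∀ k : ℕ, f (x (k + 1)) - f (x k) ≤ -δ * ‖gradient f (x k)‖ ^ (p / (p - 1)))
    (k : ℕ) (hk : 1 ≤ k) :
    ∃ s ≤ k, ‖gradient f (x s)‖ ≤ ((f (x 0) - f xstar) / (δ * k)) ^ ((p - 1) / p) := by
  have hp0 : (0:ℝ) < p := lt_trans one_pos hp
  have hp1 : (0:ℝ) < p - 1 := by linarith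
  set q := p / (p - 1) with hq
  have hq0 : 0 < q := div_pos hp0 hp1
  have hk0 : (0:ℝ) < (k : ℝ) := by exact_mod_cast hk
  have hA : 0 ≤ f (x 0) - f xstar := by have := hmin (x 0); linarith
  obtain ⟨s, hs, hsmin⟩ := Finset.exists_min_image (Finset.range k)
    (fun i => ‖gradient f (x i)‖) ⟨0, Finset.mem_range.2 (by omega)⟩
  set m := ‖gradient f (x s)‖ with hm
  have hm0 : 0 ≤ m := norm_nonneg _
  refine ⟨s, le_of_lt (Finset.mem_range.1 hs), ?_⟩
  have hsum : ∑ i ∈ Finset.range k, δ * ‖gradient f (x i)‖ ^ q ≤ f (x 0) - f xstar := by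
    have h1 : ∑ i ∈ Finset.range k, (f (x i) - f (x (i+1))) = f (x 0) - f (x k) := by
      simpa using Finset.sum_range_sub' (fun i => f (x i)) k
    have h2 : ∑ i ∈ Finset.range k, δ * ‖gradient f (x i)‖ ^ q ≤
        ∑ i ∈ Finset.range k, (f (x i) - f (x (i+1))) := by
      refine Finset.sum_le_sum fun i _ => ?_
      have := hdesc i
      nlinarith [this]
    have := hmin (x k)
    linarith
  have hlow : (k : ℝ) * (δ * m ^ q) ≤ ∑ i ∈ Finset.range k, δ * ‖gradient f (x i)‖ ^ q := by
    have := Finset.card_nsmul_le_sum (Finset.range k)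
      (fun i => δ * ‖gradient f (x i)‖ ^ q) (δ * m ^ q)
      (fun i hi => by
        have hmi : m ≤ ‖gradient f (x i)‖ := hsmin i hi
        have : m ^ q ≤ ‖gradient f (x i)‖ ^ q :=
          Real.rpow_le_rpow hm0 hmi hq0.le
        show δ * m ^ q ≤ δ * ‖gradient f (x i)‖ ^ q
        nlinarith)
    simpa [Finset.card_range, nsmul_eq_mul] using this
  have hkey : m ^ q ≤ (f (x 0) - f xstar) / (δ * k) := by
    rw [le_div_iff₀ (by positivity)]
    nlinarith
  have hinv : (p - 1) / p = 1 / q := by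
    rw [hq, one_div_div]
  rw [hinv]
  have hid : (m ^ q) ^ (1 / q) = m := by
    rw [← Real.rpow_mul hm0, mul_one_div_cancel hq0.ne', Real.rpow_one]
  calc m = (m ^ q) ^ (1 / q) := hid.symm
    _ ≤ ((f (x 0) - f xstar) / (δ * k)) ^ (1 / q) :=
        Real.rpow_le_rpow (Real.rpow_nonneg hm0 q) hkey (by positivity)
end

section
/- Let f : X → ℝ be differentiable, μ-gradient dominated of order p, and suppose a sequence (x_k) satisfies f(x_{k+1}) - f(x_k) ≤ -δ‖∇f(x_{k+1})‖^{p/(p-1)} for all k. Then f(x_k) - f(x*) ≤ (f(x_0) - f(x*)) · (1 + (p/(p-1)) μ^{1/(p-1)} δ)^{-k} ≤ (f(x_0) - f(x*)) · exp(-(p/(p-1)) μ^{1/(p-1)} δ k / (1 + (p/(p-1)) μ^{1/(p-1)} δ)) for all k. -/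
/-!
Gradient domination turns the implicit descent inequality into the contraction
`(1 + c) (f x_{k+1} - f x*) ≤ f x_k - f x*` with `c = p/(p-1) μ^{1/(p-1)} δ`, which iterates to the
geometric rate; the exponential bound is `1/(1 + c) = 1 - c/(1 + c) ≤ exp (-c/(1 + c))`.
-/

open Real

theorem le_mul_pow_of_succ_le_mul {R : Type*} [CommSemiring R] [PartialOrder R] [IsOrderedRing R]
    {u : ℕ → R} {q : R} (hq : 0 ≤ q) (hu : ∀ n, u (n + 1) ≤ q * u n) (n : ℕ) :
    u n ≤ u 0 * q ^ n := by
  simpa using discrete_gronwall_prod_general (b := 0) (c := fun _ ↦ q)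
    (fun n _ ↦ by simpa using hu n) (fun _ _ ↦ hq) (Nat.zero_le n)

theorem inv_one_add_le_exp_neg_div {c : ℝ} (hc : -1 < c) : (1 + c)⁻¹ ≤ exp (-(c / (1 + c))) := by
  have h1c : 1 + c ≠ 0 := by linarith
  calc (1 + c)⁻¹ = -(c / (1 + c)) + 1 := by field_simp; ring
    _ ≤ exp (-(c / (1 + c))) := add_one_le_exp _

theorem inv_one_add_pow_le_exp_neg_mul_div {c : ℝ} (hc : -1 < c) (k : ℕ) :
    (1 + c)⁻¹ ^ k ≤ exp (-(c * k / (1 + c))) := by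
  calc (1 + c)⁻¹ ^ k ≤ exp (-(c / (1 + c))) ^ k := by
        gcongr
        · exact inv_nonneg.2 (by linarith)
        · exact inv_one_add_le_exp_neg_div hc
    _ = exp (-(c * k / (1 + c))) := by rw [← exp_nat_mul]; ring_nf

theorem one_add_mul_le_of_descent_of_dominated {p m δ g e e' : ℝ} (hp : 1 < p) (hδ : 0 ≤ δ)
    (hdom : m * e' ≤ (p - 1) / p * g) (hdesc : e' - e ≤ -δ * g) :
    (1 + p / (p - 1) * m * δ) * e' ≤ e := by
  have hp1 : p - 1 ≠ 0 := by linarith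
  have hg : p / (p - 1) * m * e' ≤ g := by
    calc p / (p - 1) * m * e' = p / (p - 1) * (m * e') := by ring
      _ ≤ p / (p - 1) * ((p - 1) / p * g) := by gcongr
      _ = g := by field_simp
  linarith [mul_le_mul_of_nonneg_left hg hδ]

theorem descent_gradient_dominated_implicit_linear_rate_general
    {X : Type*} [NormedAddCommGroup X] [InnerProductSpace ℝ X] [FiniteDimensional ℝ X]
    (f : X → ℝ)
    (xstar : X) (hmin : ∀ y, f xstar ≤ f y)
    (p δ μ : ℝ) (hp : 1 < p) (hδ : 0 < δ) (hμ : 0 < μ)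
    (hdom : ∀ z : X, μ ^ (1 / (p - 1)) * (f z - f xstar) ≤
      (p - 1) / p * ‖gradient f z‖ ^ (p / (p - 1)))
    (x : ℕ → X)
    (hdesc : ∀ k : ℕ, f (x (k + 1)) - f (x k) ≤ -δ * ‖gradient f (x (k + 1))‖ ^ (p / (p - 1))) :
    ∀ k : ℕ,
      f (x k) - f xstar ≤
        (f (x 0) - f xstar) * ((1 + p / (p - 1) * μ ^ (1 / (p - 1)) * δ)⁻¹) ^ k ∧
      (f (x 0) - f xstar) * ((1 + p / (p - 1) * μ ^ (1 / (p - 1)) * δ)⁻¹) ^ k ≤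
        (f (x 0) - f xstar) *
          Real.exp (-(p / (p - 1) * μ ^ (1 / (p - 1)) * δ * k /
            (1 + p / (p - 1) * μ ^ (1 / (p - 1)) * δ))) := by
  set c := p / (p - 1) * μ ^ (1 / (p - 1)) * δ
  have hc : 0 ≤ c := by
    have : 0 < p - 1 := by linarith
    positivity
  have hcontract (k : ℕ) : f (x (k + 1)) - f xstar ≤ (1 + c)⁻¹ * (f (x k) - f xstar) := by
    rw [inv_mul_eq_div, le_div_iff₀' (by linarith)]
    refine one_add_mul_le_of_descent_of_dominated hp hδ.le (hdom _) ?_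
    rw [sub_sub_sub_cancel_right]
    exact hdesc k
  intro k
  exact ⟨le_mul_pow_of_succ_le_mul (u := fun k ↦ f (x k) - f xstar)
    (inv_nonneg.2 (by linarith)) hcontract k,
    mul_le_mul_of_nonneg_left (inv_one_add_pow_le_exp_neg_mul_div (by linarith) k)
      (sub_nonneg.2 (hmin _))⟩

theorem descent_gradient_dominated_implicit_linear_rate
    {X : Type*} [NormedAddCommGroup X] [InnerProductSpace ℝ X] [FiniteDimensional ℝ X]
    (f : X → ℝ) (hf : Differentiable ℝ f)
    (xstar : X) (hmin : ∀ y, f xstar ≤ f y)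
    (p δ μ : ℝ) (hp : 1 < p) (hδ : 0 < δ) (hμ : 0 < μ)
    (hdom : ∀ z : X, μ ^ (1 / (p - 1)) * (f z - f xstar) ≤
      (p - 1) / p * ‖gradient f z‖ ^ (p / (p - 1)))
    (x : ℕ → X)
    (hdesc : ∀ k : ℕ, f (x (k + 1)) - f (x k) ≤ -δ * ‖gradient f (x (k + 1))‖ ^ (p / (p - 1))) :
    ∀ k : ℕ,
      f (x k) - f xstar ≤
        (f (x 0) - f xstar) * ((1 + p / (p - 1) * μ ^ (1 / (p - 1)) * δ)⁻¹) ^ k ∧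
      (f (x 0) - f xstar) * ((1 + p / (p - 1) * μ ^ (1 / (p - 1)) * δ)⁻¹) ^ k ≤
        (f (x 0) - f xstar) *
          Real.exp (-(p / (p - 1) * μ ^ (1 / (p - 1)) * δ * k /
            (1 + p / (p - 1) * μ ^ (1 / (p - 1)) * δ))) :=
  descent_gradient_dominated_implicit_linear_rate_general f xstar hmin p δ μ hp hδ hμ hdom x hdesc
end

section
/- Let f(x) = (1/p)|x|^p on ℝ with p > 2, ε > 0, and initial point 0 < x_0 ≤ (2ε)^{-1/(p-2)}. The gradient descent iterates x_{k+1} = x_k - ε·sign(x_k)|x_k|^{p-1} satisfy x_k > 0 for all k and x_k ≥ (x_0^{-(p-2)} + (p-2) 2^{p-1} ε k)^{-1/(p-2)}; consequently f(x_k) ≥ (1/p)(x_0^{-(p-2)} + (p-2) 2^{p-1} ε k)^{-p/(p-2)}. -/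
open Real Set

/-!
Write q = p - 2. For positive x the step is x ↦ x (1 - t) with t = ε x^q, and the bound on x₀
gives t ≤ 1/2; since the iterates decrease, this persists. By the mean value theorem
(1 - t)^(-q) ≤ 1 + q 2^(q+1) t on [0, 1/2], so x^(-q) grows by at most q 2^(q+1) ε per step,
and inverting this linear bound on x_k^(-q) gives the rate.
-/

lemma one_sub_rpow_neg_le {q t : ℝ} (hq : 0 ≤ q) (ht₀ : 0 ≤ t) (ht : t ≤ 1 / 2) :
    (1 - t) ^ (-q) ≤ 1 + q * 2 ^ (q + 1) * t := by
  set f : ℝ → ℝ := fun s => (1 - s) ^ (-q)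
  have hf : ∀ s < 1, HasDerivAt f (q * (1 - s) ^ (-q - 1)) s := fun s hs => by
    convert ((hasDerivAt_id' s).const_sub 1).rpow_const (p := -q) (Or.inl (by linarith))
      using 1
    ring
  have hf' : ∀ s ∈ interior (Icc (0 : ℝ) (1 / 2)), deriv f s ≤ q * 2 ^ (q + 1) := by
    intro s hs
    rw [interior_Icc] at hs
    rw [(hf s (by linarith [hs.2])).deriv]
    gcongr
    calc (1 - s) ^ (-q - 1) ≤ (1 / 2 : ℝ) ^ (-q - 1) :=
          rpow_le_rpow_of_nonpos (by norm_num) (by linarith [hs.2]) (by linarith)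
      _ = 2 ^ (q + 1) := by rw [one_div, inv_rpow zero_le_two, ← rpow_neg zero_le_two]; ring_nf
  have := (convex_Icc (0 : ℝ) (1 / 2)).image_sub_le_mul_sub_of_deriv_le
    (fun s hs => (hf s (by linarith [hs.2])).continuousAt.continuousWithinAt)
    (fun s hs => by
      rw [interior_Icc] at hs
      exact (hf s (by linarith [hs.2])).differentiableAt.differentiableWithinAt)
    hf' 0 ⟨le_rfl, by norm_num⟩ t ⟨ht₀, ht⟩ ht₀
  simp only [f, sub_zero, one_rpow] at this
  linarith

lemma sub_mul_sign_mul_abs_rpow_add_one (ε q x : ℝ) :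
    x - ε * sign x * |x| ^ (q + 1) = x * (1 - ε * |x| ^ q) := by
  have hsign : sign x * |x| = x := by
    rcases lt_trichotomy x 0 with hx | rfl | hx
    · rw [sign_of_neg hx, abs_of_neg hx]; ring
    · simp
    · rw [sign_of_pos hx, abs_of_pos hx, one_mul]
  rcases eq_or_ne x 0 with rfl | hx
  · simp
  · rw [rpow_add (abs_pos.2 hx), rpow_one]
    linear_combination (-ε * |x| ^ q) * hsign

lemma mul_rpow_le_half_of_le_rpow_neg_inv {ε q x : ℝ} (hε : 0 < ε) (hq : 0 < q) (hx : 0 ≤ x)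
    (h : x ≤ (2 * ε) ^ (-(1 / q))) : ε * x ^ q ≤ 1 / 2 := by
  have : x ^ q ≤ (2 * ε)⁻¹ := by
    calc x ^ q ≤ ((2 * ε) ^ (-(1 / q))) ^ q := by gcongr
      _ = (2 * ε)⁻¹ := by
        rw [← rpow_mul (by positivity), neg_mul, one_div_mul_cancel hq.ne', rpow_neg_one]
  calc ε * x ^ q ≤ ε * (2 * ε)⁻¹ := by gcongr
    _ = 1 / 2 := by field_simp

lemma rpow_neg_div_le_of_rpow_neg_le {x A q r : ℝ} (hx : 0 < x) (hq : 0 < q) (hr : 0 ≤ r)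
    (h : x ^ (-q) ≤ A) : A ^ (-(r / q)) ≤ x ^ r := by
  calc A ^ (-(r / q)) ≤ (x ^ (-q)) ^ (-(r / q)) :=
        rpow_le_rpow_of_nonpos (by positivity) h (by simp; positivity)
    _ = x ^ r := by rw [← rpow_mul hx.le]; field_simp

lemma rpow_neg_mul_one_sub_le {ε q x : ℝ} (hq : 0 ≤ q) (hε : 0 ≤ ε) (hx : 0 < x)
    (h : ε * x ^ q ≤ 1 / 2) : (x * (1 - ε * x ^ q)) ^ (-q) ≤ x ^ (-q) + q * 2 ^ (q + 1) * ε := by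
  have ht₀ : 0 ≤ ε * x ^ q := by positivity
  calc (x * (1 - ε * x ^ q)) ^ (-q) = x ^ (-q) * (1 - ε * x ^ q) ^ (-q) :=
        mul_rpow hx.le (by linarith)
    _ ≤ x ^ (-q) * (1 + q * 2 ^ (q + 1) * (ε * x ^ q)) := by
        gcongr; exact one_sub_rpow_neg_le hq ht₀ h
    _ = x ^ (-q) + q * 2 ^ (q + 1) * ε * (x ^ (-q) * x ^ q) := by ring
    _ = x ^ (-q) + q * 2 ^ (q + 1) * ε := by
        rw [← rpow_add hx, neg_add_cancel, rpow_zero, mul_one]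

theorem mul_one_sub_rpow_iterate_bounds {ε q : ℝ} {y : ℕ → ℝ} (hq : 0 ≤ q) (hε : 0 ≤ ε)
    (hy₀ : 0 < y 0) (hy₀' : ε * y 0 ^ q ≤ 1 / 2)
    (hy : ∀ k, y (k + 1) = y k * (1 - ε * |y k| ^ q)) (k : ℕ) :
    0 < y k ∧ y k ≤ y 0 ∧ y k ^ (-q) ≤ y 0 ^ (-q) + q * 2 ^ (q + 1) * ε * k := by
  induction k with
  | zero => exact ⟨hy₀, le_rfl, by simp⟩
  | succ k ih =>
    obtain ⟨hpos, hle, hbound⟩ := ih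
    have ht₀ : 0 ≤ ε * y k ^ q := by positivity
    have ht : ε * y k ^ q ≤ 1 / 2 := le_trans (by gcongr) hy₀'
    rw [hy k, abs_of_pos hpos]
    refine ⟨mul_pos hpos (by linarith),
      (mul_le_of_le_one_right hpos.le (by linarith)).trans hle, ?_⟩
    calc _ ≤ y k ^ (-q) + q * 2 ^ (q + 1) * ε := rpow_neg_mul_one_sub_le hq hε hpos ht
      _ ≤ _ := by push_cast; linarith

theorem gradient_descent_power_polynomial_rate
    (p ε : ℝ) (hp : 2 < p) (hε : 0 < ε)
    (x : ℕ → ℝ) (hx0 : 0 < x 0) (hx0' : x 0 ≤ (2 * ε) ^ (-(1 / (p - 2))))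
    (hrec : ∀ k : ℕ, x (k + 1) = x k - ε * Real.sign (x k) * |x k| ^ (p - 1)) :
    ∀ k : ℕ, 0 < x k ∧
      ((x 0) ^ (-(p - 2)) + (p - 2) * 2 ^ (p - 1) * ε * k) ^ (-(1 / (p - 2))) ≤ x k ∧
      (1 / p) * ((x 0) ^ (-(p - 2)) + (p - 2) * 2 ^ (p - 1) * ε * k) ^ (-(p / (p - 2))) ≤
        (1 / p) * |x k| ^ p := by
  have hq : 0 < p - 2 := by linarith
  have hexp : p - 1 = p - 2 + 1 := by ring
  have hstep : ∀ k, x (k + 1) = x k * (1 - ε * |x k| ^ (p - 2)) := fun k => by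
    rw [hrec k, hexp, sub_mul_sign_mul_abs_rpow_add_one]
  intro k
  obtain ⟨hpos, -, hbound⟩ := mul_one_sub_rpow_iterate_bounds hq.le hε.le hx0
    (mul_rpow_le_half_of_le_rpow_neg_inv hε hq hx0.le hx0') hstep k
  rw [← hexp] at hbound
  refine ⟨hpos, ?_, ?_⟩
  · simpa only [rpow_one] using rpow_neg_div_le_of_rpow_neg_le hpos hq zero_le_one hbound
  · rw [abs_of_pos hpos]
    gcongr
    exact rpow_neg_div_le_of_rpow_neg_le hpos hq (by linarith) hbound
end

section
/- Let f : X → ℝ be continuously differentiable along a curve X_t satisfying (d/dt) f(X_t) ≤ -‖∇f(X_t)‖^{p/(p-1)} for all t ≥ 0, where 1 < p < ∞. Then for all t > 0, min_{0 ≤ s ≤ t} ‖∇f(X_s)‖ ≤ ((f(X_0) - f(x*))/t)^{(p-1)/p}, where x* is a minimizer of f. -/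
open Real

theorem descent_flow_gradient_min_bound
    {E : Type*} [NormedAddCommGroup E] [InnerProductSpace ℝ E] [FiniteDimensional ℝ E]
    (f : E → ℝ) (hf : Differentiable ℝ f)
    (xstar : E) (hmin : ∀ y, f xstar ≤ f y)
    (p : ℝ) (hp : 1 < p)
    (C : ℝ → E) (d : ℝ → ℝ)
    (hderiv : ∀ t ≥ (0 : ℝ), HasDerivAt (fun s => f (C s)) (d t) t)
    (hdecay : ∀ t ≥ (0 : ℝ), d t ≤ -‖gradient f (C t)‖ ^ (p / (p - 1)))
    (t : ℝ) (ht : 0 < t) :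
    ∃ s, 0 ≤ s ∧ s ≤ t ∧
      ‖gradient f (C s)‖ ≤ ((f (C 0) - f xstar) / t) ^ ((p - 1) / p) := by
  by_contra hcon
  push_neg at hcon
  set A : ℝ := (f (C 0) - f xstar) / t with hAdef
  have hA : 0 ≤ A := div_nonneg (sub_nonneg.2 (hmin _)) ht.le
  have hp1 : (0:ℝ) < p - 1 := by linarith
  have hp0 : (0:ℝ) < p := by linarith
  have hq : 0 < p / (p - 1) := div_pos hp0 hp1
  set B : ℝ := A ^ ((p - 1) / p) with hBdef
  have hB : 0 ≤ B := Real.rpow_nonneg hA _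
  have hBq : B ^ (p / (p - 1)) = A := by
    rw [hBdef, ← Real.rpow_mul hA]
    have : (p - 1) / p * (p / (p - 1)) = 1 := by
      field_simp
    rw [this, Real.rpow_one]
  set h : ℝ → ℝ := fun s => f (C s) + A * s with hhdef
  have hderivh : ∀ s ∈ Set.Icc (0:ℝ) t, HasDerivAt h (d s + A) s := by
    intro s hs
    have h1 := hderiv s hs.1
    have h2 : HasDerivAt (fun s : ℝ => A * s) A s := by
      simpa using (hasDerivAt_id s).const_mul A
    exact h1.add h2
  have hcont : ContinuousOn h (Set.Icc 0 t) := fun s hs =>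
    (hderivh s hs).continuousAt.continuousWithinAt
  have hderneg : ∀ s ∈ interior (Set.Icc (0:ℝ) t), deriv h s < 0 := by
    intro s hs
    rw [interior_Icc] at hs
    have hsIcc : s ∈ Set.Icc (0:ℝ) t := ⟨hs.1.le, hs.2.le⟩
    rw [(hderivh s hsIcc).deriv]
    have hlt : B < ‖gradient f (C s)‖ := hcon s hs.1.le hs.2.le
    have : B ^ (p / (p - 1)) < ‖gradient f (C s)‖ ^ (p / (p - 1)) :=
      Real.rpow_lt_rpow hB hlt hq
    have hd := hdecay s hs.1.le
    rw [hBq] at this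
    linarith
  have hanti : StrictAntiOn h (Set.Icc 0 t) :=
    strictAntiOn_of_deriv_neg (convex_Icc 0 t) hcont hderneg
  have hlt : h t < h 0 :=
    hanti (Set.left_mem_Icc.2 ht.le) (Set.right_mem_Icc.2 ht.le) ht
  have hAt : A * t = f (C 0) - f xstar := by
    rw [hAdef]; field_simp
  have := hmin (C t)
  simp only [hhdef, mul_zero, add_zero] at hlt
  linarith
end

section
/- Let f : X → ℝ be convex and differentiable and let X_t be a curve satisfying (d/dt) f(X_t) ≤ -‖∇f(X_t)‖^{p/(p-1)} with ‖X_t - x*‖ ≤ R for all t ≥ 0, where 1 < p < ∞. Then f(X_t) - f(x*) ≤ p^{p-1} R^p / t^{p-1} for all t > 0. -/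
/-!
Along the flow, the gap `g t = f (X t) - f x⋆` satisfies `g t ≤ ‖∇f (X t)‖ R` by convexity and
Cauchy–Schwarz, while `g' t ≤ -‖∇f (X t)‖ ^ q` with `q = p / (p - 1)`. Young's inequality with
exponents `p, q` turns these into `(t ^ p g t)' ≤ p ^ (p - 1) R ^ p`, and since `t ^ p g t`
vanishes at `t = 0`, integrating gives `t ^ p g t ≤ p ^ (p - 1) R ^ p t`.
-/

open Real Set RealInnerProductSpace

theorem ConvexOn.apply_sub_le_sub_of_hasFDerivAt {E : Type*} [NormedAddCommGroup E]
    [NormedSpace ℝ E] {s : Set E} {f : E → ℝ} {f' : E →L[ℝ] ℝ} {x y : E}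
    (hfc : ConvexOn ℝ s f) (hx : x ∈ s) (hy : y ∈ s) (hf : HasFDerivAt f f' x) :
    f' (y - x) ≤ f y - f x := by
  let φ : ℝ → ℝ := f ∘ AffineMap.lineMap x y
  have hφc : ConvexOn ℝ (AffineMap.lineMap x y ⁻¹' s) φ := hfc.comp_affineMap _
  have hφ : HasDerivAt φ (f' (y - x)) 0 := by
    have hline : HasDerivAt (fun h : ℝ => AffineMap.lineMap x y h) (y - x) 0 :=
      AffineMap.hasDerivAt_lineMap
    have hf0 : HasFDerivAt f f' (AffineMap.lineMap x y (0 : ℝ)) := by simpa using hf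
    exact hf0.comp_hasDerivAt 0 hline
  simpa [φ, slope_def_field] using
    hφc.le_slope_of_hasDerivAt (by simpa using hx) (by simpa using hy) zero_lt_one hφ

theorem ConvexOn.sub_le_norm_gradient_mul_norm_sub {E : Type*} [NormedAddCommGroup E]
    [InnerProductSpace ℝ E] [CompleteSpace E] {s : Set E} {f : E → ℝ} {x y : E}
    (hfc : ConvexOn ℝ s f) (hx : x ∈ s) (hy : y ∈ s) (hf : DifferentiableAt ℝ f x) :
    f x - f y ≤ ‖gradient f x‖ * ‖x - y‖ := by
  have hfirst : ⟪gradient f x, y - x⟫ ≤ f y - f x := by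
    simpa [InnerProductSpace.toDual_apply_apply] using
      hfc.apply_sub_le_sub_of_hasFDerivAt hx hy
        (hasGradientAt_iff_hasFDerivAt.mp hf.hasGradientAt)
  have hcs : ⟪gradient f x, x - y⟫ ≤ ‖gradient f x‖ * ‖x - y‖ := real_inner_le_norm _ _
  rw [← neg_sub, inner_neg_right] at hfirst
  linarith

theorem mul_rpow_sub_one_mul_le_rpow_add_rpow_mul {p q t s R : ℝ} (hpq : p.HolderConjugate q)
    (ht : 0 ≤ t) (hs : 0 ≤ s) (hR : 0 ≤ R) :
    p * t ^ (p - 1) * (s * R) ≤ p ^ (p - 1) * R ^ p + t ^ p * s ^ q := by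
  have hyoung := young_inequality_of_nonneg (mul_nonneg hpq.nonneg hR)
    (mul_nonneg (rpow_nonneg ht (p - 1)) hs) hpq
  have hpR : (p * R) ^ p / p = p ^ (p - 1) * R ^ p := by
    rw [mul_rpow hpq.nonneg hR, rpow_sub_one hpq.ne_zero]; ring
  have hts : (t ^ (p - 1) * s) ^ q = t ^ p * s ^ q := by
    rw [mul_rpow (rpow_nonneg ht _) hs, ← rpow_mul ht, hpq.sub_one_mul_conj]
  have hdiv : t ^ p * s ^ q / q ≤ t ^ p * s ^ q :=
    div_le_self (by positivity) hpq.symm.lt.le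
  rw [hpR, hts] at hyoung
  linarith

theorem le_div_rpow_of_hasDerivAt_rpow_mul_le {g g' : ℝ → ℝ} {p M T : ℝ} (hp : 0 < p)
    (hT : 0 < T) (hcont : ContinuousOn g (Icc 0 T))
    (hderiv : ∀ t ∈ Ioo 0 T, HasDerivAt g (g' t) t)
    (hbound : ∀ t ∈ Ioo 0 T, p * t ^ (p - 1) * g t + t ^ p * g' t ≤ M) :
    g T ≤ M / T ^ (p - 1) := by
  have hF : ∀ t ∈ Ioo 0 T,
      HasDerivAt (fun s => s ^ p * g s) (p * t ^ (p - 1) * g t + t ^ p * g' t) t :=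
    fun t ht => (hasDerivAt_rpow_const (Or.inl ht.1.ne')).mul (hderiv t ht)
  have hlyap : T ^ p * g T - 0 ^ p * g 0 ≤ M * (T - 0) := by
    refine (convex_Icc 0 T).image_sub_le_mul_sub_of_deriv_le
      (((continuous_rpow_const hp.le).continuousOn).mul hcont) ?_ ?_ 0 ⟨le_rfl, hT.le⟩ T
      ⟨hT.le, le_rfl⟩ hT.le <;> rw [interior_Icc]
    · exact fun t ht => (hF t ht).differentiableAt.differentiableWithinAt
    · exact fun t ht => (hF t ht).deriv ▸ hbound t ht
  rw [zero_rpow hp.ne', zero_mul, sub_zero, sub_zero] at hlyap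
  rw [rpow_sub_one hT.ne', div_div_eq_mul_div, le_div_iff₀ (rpow_pos_of_pos hT _)]
  linarith

theorem descent_flow_convex_rate_general
    {E : Type*} [NormedAddCommGroup E] [InnerProductSpace ℝ E] [FiniteDimensional ℝ E]
    (f : E → ℝ) (hf : Differentiable ℝ f) (hconv : ConvexOn ℝ Set.univ f)
    (xstar : E)
    (p R : ℝ) (hp : 1 < p)
    (C : ℝ → E) (d : ℝ → ℝ)
    (hderiv : ∀ t ≥ (0 : ℝ), HasDerivAt (fun s => f (C s)) (d t) t)
    (hdecay : ∀ t ≥ (0 : ℝ), d t ≤ -‖gradient f (C t)‖ ^ (p / (p - 1)))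
    (hR : ∀ t ≥ (0 : ℝ), ‖C t - xstar‖ ≤ R) :
    ∀ t > (0 : ℝ), f (C t) - f xstar ≤ p ^ (p - 1) * R ^ p / t ^ (p - 1) := by
  intro T hT
  have hpq : p.HolderConjugate (p / (p - 1)) := .conjExponent hp
  have hR0 : 0 ≤ R := (norm_nonneg _).trans (hR 0 le_rfl)
  refine le_div_rpow_of_hasDerivAt_rpow_mul_le hpq.pos hT
    (fun t ht => ((hderiv t ht.1).continuousAt.sub continuousAt_const).continuousWithinAt)
    (fun t ht => (hderiv t ht.1.le).sub_const _) fun t ht => ?_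
  have ht : 0 ≤ t := ht.1.le
  have hgap : f (C t) - f xstar ≤ ‖gradient f (C t)‖ * R :=
    (hconv.sub_le_norm_gradient_mul_norm_sub trivial trivial (hf _)).trans
      (mul_le_mul_of_nonneg_left (hR t ht) (norm_nonneg _))
  calc p * t ^ (p - 1) * (f (C t) - f xstar) + t ^ p * d t
      ≤ p * t ^ (p - 1) * (‖gradient f (C t)‖ * R)
          + t ^ p * -‖gradient f (C t)‖ ^ (p / (p - 1)) := by
        gcongr
        exact hdecay t ht
    _ ≤ p ^ (p - 1) * R ^ p := by
        have hyoung := mul_rpow_sub_one_mul_le_rpow_add_rpow_mul hpq ht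
          (norm_nonneg (gradient f (C t))) hR0
        linarith

theorem descent_flow_convex_rate
    {E : Type*} [NormedAddCommGroup E] [InnerProductSpace ℝ E] [FiniteDimensional ℝ E]
    (f : E → ℝ) (hf : Differentiable ℝ f) (hconv : ConvexOn ℝ Set.univ f)
    (xstar : E) (hmin : ∀ y, f xstar ≤ f y)
    (p R : ℝ) (hp : 1 < p)
    (C : ℝ → E) (d : ℝ → ℝ)
    (hderiv : ∀ t ≥ (0 : ℝ), HasDerivAt (fun s => f (C s)) (d t) t)
    (hdecay : ∀ t ≥ (0 : ℝ), d t ≤ -‖gradient f (C t)‖ ^ (p / (p - 1)))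
    (hR : ∀ t ≥ (0 : ℝ), ‖C t - xstar‖ ≤ R) :
    ∀ t > (0 : ℝ), f (C t) - f xstar ≤ p ^ (p - 1) * R ^ p / t ^ (p - 1) :=
  descent_flow_convex_rate_general f hf hconv xstar p R hp C d hderiv hdecay hR
end

section
/- Let f : X → ℝ be differentiable and μ-gradient dominated of order p, and X_t a curve satisfying (d/dt) f(X_t) ≤ -‖∇f(X_t)‖^{p/(p-1)}. Then f(X_t) - f(x*) ≤ (f(X_0) - f(x*)) · exp(-(p/(p-1)) μ^{1/(p-1)} t) for all t ≥ 0. -/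
/-! Gradient domination turns the decay condition on the flow into the linear differential
inequality `h' ≤ -κ h` for the gap `h t = f (C t) - f xstar`, with
`κ = p / (p - 1) * μ ^ (1 / (p - 1))`; Grönwall's inequality then integrates it. -/

open Real Topology

open Set in
theorem le_mul_exp_neg_of_hasDerivAt_le_neg_mul {g g' : ℝ → ℝ} {κ : ℝ}
    (hg : ∀ t ≥ (0 : ℝ), HasDerivAt g (g' t) t) (hbound : ∀ t ≥ (0 : ℝ), g' t ≤ -κ * g t) :
    ∀ t ≥ (0 : ℝ), g t ≤ g 0 * exp (-(κ * t)) := by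
  intro t ht
  have hcont : ContinuousOn g (Icc 0 t) :=
    fun s hs => (hg s hs.1).continuousAt.continuousWithinAt
  have hslope : ∀ s ∈ Ico 0 t, ∀ r, g' s < r →
      ∃ᶠ z in 𝓝[>] s, (z - s)⁻¹ * (g z - g s) < r :=
    fun s hs _ hr => (hg s hs.1).hasDerivWithinAt.liminf_right_slope_le hr
  have key := le_gronwallBound_of_liminf_deriv_right_le hcont hslope le_rfl
    (K := -κ) (ε := 0) (fun s hs => by simpa using hbound s hs.1) t ⟨ht, le_rfl⟩
  rwa [gronwallBound_ε0, sub_zero, neg_mul] at key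

theorem descent_flow_gradient_dominated_rate_general
    {E : Type*} [NormedAddCommGroup E] [InnerProductSpace ℝ E] [FiniteDimensional ℝ E]
    (f : E → ℝ)
    (xstar : E)
    (p μ : ℝ) (hp : 1 < p)
    (hdom : ∀ z : E, μ ^ (1 / (p - 1)) * (f z - f xstar) ≤
      (p - 1) / p * ‖gradient f z‖ ^ (p / (p - 1)))
    (C : ℝ → E) (d : ℝ → ℝ)
    (hderiv : ∀ t ≥ (0 : ℝ), HasDerivAt (fun s => f (C s)) (d t) t)
    (hdecay : ∀ t ≥ (0 : ℝ), d t ≤ -‖gradient f (C t)‖ ^ (p / (p - 1))) :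
    ∀ t ≥ (0 : ℝ), f (C t) - f xstar ≤
      (f (C 0) - f xstar) * Real.exp (-(p / (p - 1) * μ ^ (1 / (p - 1)) * t)) := by
  set κ := p / (p - 1) * μ ^ (1 / (p - 1))
  have hp₀ : p - 1 ≠ 0 := by linarith
  have hrate : ∀ z, κ * (f z - f xstar) ≤ ‖gradient f z‖ ^ (p / (p - 1)) := fun z =>
    calc κ * (f z - f xstar) = p / (p - 1) * (μ ^ (1 / (p - 1)) * (f z - f xstar)) := by ring
      _ ≤ p / (p - 1) * ((p - 1) / p * ‖gradient f z‖ ^ (p / (p - 1))) :=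
        mul_le_mul_of_nonneg_left (hdom z) (div_pos (by linarith) (by linarith)).le
      _ = ‖gradient f z‖ ^ (p / (p - 1)) := by field_simp
  exact le_mul_exp_neg_of_hasDerivAt_le_neg_mul (fun t ht => (hderiv t ht).sub_const _)
    fun t ht => by linarith [hdecay t ht, hrate (C t)]

theorem descent_flow_gradient_dominated_rate
    {E : Type*} [NormedAddCommGroup E] [InnerProductSpace ℝ E] [FiniteDimensional ℝ E]
    (f : E → ℝ) (hf : Differentiable ℝ f)
    (xstar : E) (hmin : ∀ y, f xstar ≤ f y)
    (p μ : ℝ) (hp : 1 < p) (hμ : 0 < μ)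
    (hdom : ∀ z : E, μ ^ (1 / (p - 1)) * (f z - f xstar) ≤
      (p - 1) / p * ‖gradient f z‖ ^ (p / (p - 1)))
    (C : ℝ → E) (d : ℝ → ℝ)
    (hderiv : ∀ t ≥ (0 : ℝ), HasDerivAt (fun s => f (C s)) (d t) t)
    (hdecay : ∀ t ≥ (0 : ℝ), d t ≤ -‖gradient f (C t)‖ ^ (p / (p - 1))) :
    ∀ t ≥ (0 : ℝ), f (C t) - f xstar ≤
      (f (C 0) - f xstar) * Real.exp (-(p / (p - 1) * μ ^ (1 / (p - 1)) * t)) :=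
  descent_flow_gradient_dominated_rate_general f xstar p μ hp hdom C d hderiv hdecay
end

section
/- Let f : X → ℝ be convex and differentiable with ‖∇^2 f(x)‖ ≤ L, and let h be twice differentiable with m·I ⪯ ∇²h(x) ⪯ M·I for all x, where 0 < m ≤ M and L > 0. Then the mirror descent update x_{k+1} = argmin_x { ⟨∇f(x_k), x⟩ + (1/η) D_h(x, x_k) } with step size 0 < η ≤ m²/(ML) satisfies f(x_{k+1}) - f(x_k) ≤ -(η/(2M)) ‖∇f(x_k)‖². -/
/-!
The mirror step's optimality condition is `∇h x₁ - ∇h xₖ = -η ∇f xₖ`. Pair it with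
`d = x₁ - xₖ`. Strong monotonicity of `∇h` then gives `m‖d‖² ≤ -η⟪∇f xₖ, d⟫`, and
cocoercivity of `∇h` gives `(η/M)‖∇f xₖ‖² ≤ -⟪∇f xₖ, d⟫`. Since `m ≤ M`, the step size
satisfies `ηL ≤ m`, so the quadratic term of the descent lemma
`f x₁ ≤ f xₖ + ⟪∇f xₖ, d⟫ + (L/2)‖d‖²` is at most half the linear term in absolute value,
and `f x₁ - f xₖ ≤ ⟪∇f xₖ, d⟫/2 ≤ -(η/(2M))‖∇f xₖ‖²`. The Hessian bounds enter only through
second-order Taylor bounds along segments.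
-/

open Real RealInnerProductSpace

/-- The Bregman divergence of `h`. -/
noncomputable def bregmanDiv {X : Type*} [NormedAddCommGroup X] [InnerProductSpace ℝ X]
    [CompleteSpace X] (h : X → ℝ) (x y : X) : ℝ :=
  h x - h y - ⟪gradient h y, x - y⟫

open InnerProductSpace

theorem le_add_deriv_add_of_deriv2_le {φ φ' φ'' : ℝ → ℝ} {C : ℝ}
    (hφ : ∀ t, HasDerivAt φ (φ' t) t) (hφ' : ∀ t, HasDerivAt φ' (φ'' t) t)
    (hC : ∀ t, φ'' t ≤ C) : φ 1 ≤ φ 0 + φ' 0 + C / 2 := by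
  have hslope : Antitone fun t => φ' t - C * t :=
    antitone_of_hasDerivAt_nonpos (fun t => (hφ' t).sub ((hasDerivAt_id t).const_mul C))
      fun t => by simpa using hC t
  have hrem (t : ℝ) : HasDerivAt (fun t => φ t - φ' 0 * t - C / 2 * t ^ 2)
      (φ' t - φ' 0 - C * t) t := by
    refine (((hφ t).sub ((hasDerivAt_id' t).const_mul (φ' 0))).sub
      ((hasDerivAt_pow 2 t).const_mul (C / 2))).congr_deriv ?_
    push_cast; ring
  have hanti : AntitoneOn (fun t => φ t - φ' 0 * t - C / 2 * t ^ 2) (Set.Ici 0) := by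
    refine antitoneOn_of_hasDerivWithinAt_nonpos (convex_Ici 0)
      (fun t _ => (hrem t).continuousAt.continuousWithinAt)
      (fun t _ => (hrem t).hasDerivWithinAt) fun t ht => ?_
    have := hslope (le_of_lt (by simpa using ht) : (0 : ℝ) ≤ t)
    simp only at this
    linarith
  have := hanti Set.self_mem_Ici (by norm_num : (1 : ℝ) ∈ Set.Ici 0) zero_le_one
  simp only at this
  linarith

theorem add_deriv_add_le_of_le_deriv2 {φ φ' φ'' : ℝ → ℝ} {C : ℝ}
    (hφ : ∀ t, HasDerivAt φ (φ' t) t) (hφ' : ∀ t, HasDerivAt φ' (φ'' t) t)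
    (hC : ∀ t, C ≤ φ'' t) : φ 0 + φ' 0 + C / 2 ≤ φ 1 := by
  have := le_add_deriv_add_of_deriv2_le (fun t => (hφ t).neg) (fun t => (hφ' t).neg)
    (C := -C) fun t => neg_le_neg (hC t)
  simp only [Pi.neg_apply] at this
  linarith

theorem DifferentiableAt.hasDerivAt_comp_add_smul {E F : Type*} [NormedAddCommGroup E]
    [NormedSpace ℝ E] [NormedAddCommGroup F] [NormedSpace ℝ F] {f : E → F} {a d : E} {t : ℝ}
    (hf : DifferentiableAt ℝ f (a + t • d)) :
    HasDerivAt (fun s : ℝ => f (a + s • d)) (fderiv ℝ f (a + t • d) d) t := by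
  have hline : HasDerivAt (fun s : ℝ => a + s • d) d t := by
    simpa using ((hasDerivAt_id t).smul_const d).const_add a
  exact hf.hasFDerivAt.comp_hasDerivAt t hline

theorem add_le_inner_sub_of_forall_add_inner_add_le {X : Type*} [NormedAddCommGroup X]
    [InnerProductSpace ℝ X] {f : X → ℝ} {g : X → X} {q : X → X → ℝ}
    (hq : ∀ a b, f a + ⟪g a, b - a⟫ + q a b ≤ f b) (a b : X) :
    q a b + q b a ≤ ⟪g b - g a, b - a⟫ := by
  have hab := hq a b
  have hba := hq b a
  have hflip : ⟪g b, a - b⟫ = -⟪g b, b - a⟫ := by rw [← inner_neg_right, neg_sub]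
  rw [inner_sub_left]
  linarith

section Gradient

variable {X : Type*} [NormedAddCommGroup X] [InnerProductSpace ℝ X] [CompleteSpace X]
  {f : X → ℝ}

theorem DifferentiableAt.hasDerivAt_comp_add_smul_inner_gradient {a d : X} {t : ℝ}
    (hf : DifferentiableAt ℝ f (a + t • d)) :
    HasDerivAt (fun s : ℝ => f (a + s • d)) ⟪gradient f (a + t • d), d⟫ t := by
  simpa [inner_gradient_left] using hf.hasDerivAt_comp_add_smul

theorem DifferentiableAt.hasDerivAt_inner_gradient_comp_add_smul {a d : X} {t : ℝ}
    (hf : DifferentiableAt ℝ (gradient f) (a + t • d)) :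
    HasDerivAt (fun s : ℝ => ⟪gradient f (a + s • d), d⟫)
      ⟪fderiv ℝ (gradient f) (a + t • d) d, d⟫ t := by
  simpa using hf.hasDerivAt_comp_add_smul.inner ℝ (hasDerivAt_const t d)

section SecondOrder

variable (hf : Differentiable ℝ f) (hf2 : Differentiable ℝ (gradient f))
include hf hf2

theorem le_quadratic_of_hessian_le {C : ℝ}
    (hC : ∀ x v : X, ⟪fderiv ℝ (gradient f) x v, v⟫ ≤ C * ‖v‖ ^ 2) (a b : X) :
    f b ≤ f a + ⟪gradient f a, b - a⟫ + C / 2 * ‖b - a‖ ^ 2 := by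
  have := le_add_deriv_add_of_deriv2_le
    (fun t => (hf (a + t • (b - a))).hasDerivAt_comp_add_smul_inner_gradient)
    (fun t => (hf2 (a + t • (b - a))).hasDerivAt_inner_gradient_comp_add_smul)
    fun t => hC _ (b - a)
  simp only [add_sub_cancel, one_smul, zero_smul, add_zero] at this
  linarith

theorem quadratic_le_of_le_hessian {C : ℝ}
    (hC : ∀ x v : X, C * ‖v‖ ^ 2 ≤ ⟪fderiv ℝ (gradient f) x v, v⟫) (a b : X) :
    f a + ⟪gradient f a, b - a⟫ + C / 2 * ‖b - a‖ ^ 2 ≤ f b := by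
  have := add_deriv_add_le_of_le_deriv2
    (fun t => (hf (a + t • (b - a))).hasDerivAt_comp_add_smul_inner_gradient)
    (fun t => (hf2 (a + t • (b - a))).hasDerivAt_inner_gradient_comp_add_smul)
    fun t => hC _ (b - a)
  simp only [add_sub_cancel, one_smul, zero_smul, add_zero] at this
  linarith

theorem gradient_strongMonotone_of_le_hessian {C : ℝ}
    (hC : ∀ x v : X, C * ‖v‖ ^ 2 ≤ ⟪fderiv ℝ (gradient f) x v, v⟫) (a b : X) :
    C * ‖b - a‖ ^ 2 ≤ ⟪gradient f b - gradient f a, b - a⟫ := by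
  have := add_le_inner_sub_of_forall_add_inner_add_le (quadratic_le_of_le_hessian hf hf2 hC) a b
  rw [norm_sub_rev a b] at this
  linarith

variable {M : ℝ} (hM : 0 < M) (hconv : ∀ x v : X, 0 ≤ ⟪fderiv ℝ (gradient f) x v, v⟫)
  (hsmooth : ∀ x v : X, ⟪fderiv ℝ (gradient f) x v, v⟫ ≤ M * ‖v‖ ^ 2)
include hM hconv hsmooth

theorem add_sq_norm_gradient_sub_le_of_hessian_le (a b : X) :
    f a + ⟪gradient f a, b - a⟫ + 1 / (2 * M) * ‖gradient f b - gradient f a‖ ^ 2 ≤ f b := by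
  set Δ := gradient f b - gradient f a
  -- `z` is a gradient step from `b` for `f - ⟪∇f a, ·⟫`, a convex function minimal at `a`
  set z := b - M⁻¹ • Δ
  have hlower := quadratic_le_of_le_hessian hf hf2 (C := 0) (by simpa using hconv) a z
  have hupper := le_quadratic_of_hessian_le hf hf2 hsmooth b z
  have hza : z - a = (b - a) - M⁻¹ • Δ := by simp only [z]; abel
  have hzb : z - b = -(M⁻¹ • Δ) := by simp only [z]; abel
  rw [hza, inner_sub_right, real_inner_smul_right, zero_div, zero_mul, add_zero] at hlower
  rw [hzb, inner_neg_right, real_inner_smul_right, norm_neg, norm_smul, Real.norm_eq_abs,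
    abs_of_pos (inv_pos.2 hM), mul_pow] at hupper
  have hgain : M⁻¹ * ⟪gradient f b, Δ⟫ - M⁻¹ * ⟪gradient f a, Δ⟫ = M⁻¹ * ‖Δ‖ ^ 2 := by
    rw [← mul_sub, ← inner_sub_left, real_inner_self_eq_norm_sq]
  have hcost : M / 2 * (M⁻¹ ^ 2 * ‖Δ‖ ^ 2) = M⁻¹ / 2 * ‖Δ‖ ^ 2 := by field_simp
  rw [show 1 / (2 * M) = M⁻¹ / 2 by ring]
  linarith

theorem gradient_cocoercive_of_hessian_le (a b : X) :
    1 / M * ‖gradient f b - gradient f a‖ ^ 2 ≤ ⟪gradient f b - gradient f a, b - a⟫ := by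
  have := add_le_inner_sub_of_forall_add_inner_add_le
    (add_sq_norm_gradient_sub_le_of_hessian_le hf hf2 hM hconv hsmooth) a b
  rw [norm_sub_rev (gradient f a)] at this
  rw [show 1 / M = 2 * (1 / (2 * M)) by field_simp]
  linarith

end SecondOrder

theorem hasFDerivAt_bregmanDiv_left {h : X → ℝ} {x : X} (hh : DifferentiableAt ℝ h x) (y : X) :
    HasFDerivAt (fun z => bregmanDiv h z y) (toDual ℝ X (gradient h x - gradient h y)) x := by
  have hlin : HasFDerivAt (fun z => ⟪gradient h y, z - y⟫) (toDual ℝ X (gradient h y)) x := by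
    simpa only [toDual_apply_apply, inner_sub_right] using
      (toDual ℝ X (gradient h y)).hasFDerivAt.sub_const ⟪gradient h y, y⟫
  rw [map_sub, toDual_gradient]
  exact (hh.hasFDerivAt.sub_const (h y)).sub hlin

theorem gradient_sub_gradient_eq_of_minimizes_bregman {h : X → ℝ} {g x y : X} {η : ℝ}
    (hh : DifferentiableAt ℝ h x) (hη : η ≠ 0)
    (hmin : ∀ z, ⟪g, x⟫ + (1 / η) * bregmanDiv h x y ≤ ⟪g, z⟫ + (1 / η) * bregmanDiv h z y) :
    gradient h x - gradient h y = -η • g := by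
  have hobj : HasFDerivAt (fun z => ⟪g, z⟫ + (1 / η) * bregmanDiv h z y)
      (toDual ℝ X (g + (1 / η) • (gradient h x - gradient h y))) x := by
    rw [map_add, map_smul]
    exact (toDual ℝ X g).hasFDerivAt.add ((hasFDerivAt_bregmanDiv_left hh y).const_mul (1 / η))
  have hloc : IsLocalMin (fun z => ⟪g, z⟫ + (1 / η) * bregmanDiv h z y) x :=
    Filter.Eventually.of_forall hmin
  have hcrit := hloc.hasFDerivAt_eq_zero hobj
  rw [LinearIsometryEquiv.map_eq_zero_iff] at hcrit
  have := congrArg (η • ·) hcrit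
  simp only [smul_add, smul_smul, smul_zero] at this
  rw [mul_one_div_cancel hη, one_smul] at this
  rw [neg_smul, eq_neg_iff_add_eq_zero, add_comm, this]

end Gradient

theorem mirror_descent_progress_general
    {X : Type*} [NormedAddCommGroup X] [InnerProductSpace ℝ X] [FiniteDimensional ℝ X]
    (f h : X → ℝ)
    (hfd : Differentiable ℝ f)
    (hfd2 : Differentiable ℝ (gradient f))
    (hhd : Differentiable ℝ h) (hhd2 : Differentiable ℝ (gradient h))
    (L m M η : ℝ) (hL : 0 < L) (hm : 0 < m) (hmM : m ≤ M)
    (hfL : ∀ x v : X, |⟪(fderiv ℝ (gradient f) x) v, v⟫| ≤ L * ‖v‖ ^ 2)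
    (hhm : ∀ x v : X, m * ‖v‖ ^ 2 ≤ ⟪(fderiv ℝ (gradient h) x) v, v⟫)
    (hhM : ∀ x v : X, ⟪(fderiv ℝ (gradient h) x) v, v⟫ ≤ M * ‖v‖ ^ 2)
    (hη : 0 < η) (hη' : η ≤ m ^ 2 / (M * L))
    (xk x1 : X)
    (hopt : ∀ z : X, ⟪gradient f xk, x1⟫ + (1 / η) * bregmanDiv h x1 xk ≤
      ⟪gradient f xk, z⟫ + (1 / η) * bregmanDiv h z xk) :
    f x1 - f xk ≤ -(η / (2 * M)) * ‖gradient f xk‖ ^ 2 := by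
  have hM : 0 < M := hm.trans_le hmM
  have hstep := gradient_sub_gradient_eq_of_minimizes_bregman (hhd x1) hη.ne' hopt
  have hdesc := le_quadratic_of_hessian_le hfd hfd2
    (fun x v => (le_abs_self _).trans (hfL x v)) xk x1
  have hmono := gradient_strongMonotone_of_le_hessian hhd hhd2 hhm xk x1
  have hcoco := gradient_cocoercive_of_hessian_le hhd hhd2 hM
    (fun x v => (mul_nonneg hm.le (sq_nonneg _)).trans (hhm x v)) hhM xk x1
  rw [hstep, real_inner_smul_left] at hmono hcoco
  rw [norm_smul, Real.norm_eq_abs, abs_neg, abs_of_pos hη, mul_pow] at hcoco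
  set s := ⟪gradient f xk, x1 - xk⟫
  have hlin : η / M * ‖gradient f xk‖ ^ 2 ≤ -s := by
    refine le_of_mul_le_mul_left ?_ hη
    calc η * (η / M * ‖gradient f xk‖ ^ 2) = 1 / M * (η ^ 2 * ‖gradient f xk‖ ^ 2) := by ring
      _ ≤ η * -s := by linarith
  have hηL : η * L ≤ m := by
    rw [le_div_iff₀ (by positivity)] at hη'
    nlinarith
  have hquad : L * ‖x1 - xk‖ ^ 2 ≤ -s := by
    refine le_of_mul_le_mul_left ?_ hm
    calc m * (L * ‖x1 - xk‖ ^ 2) = L * (m * ‖x1 - xk‖ ^ 2) := by ring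
      _ ≤ L * (-η * s) := mul_le_mul_of_nonneg_left hmono hL.le
      _ = η * L * -s := by ring
      _ ≤ m * -s := mul_le_mul_of_nonneg_right hηL (le_trans (by positivity) hlin)
  rw [show η / (2 * M) = η / M / 2 by ring]
  linarith

theorem mirror_descent_progress
    {X : Type*} [NormedAddCommGroup X] [InnerProductSpace ℝ X] [FiniteDimensional ℝ X]
    (f h : X → ℝ)
    (hfd : Differentiable ℝ f) (hconv : ConvexOn ℝ Set.univ f)
    (hfd2 : Differentiable ℝ (gradient f))
    (hhd : Differentiable ℝ h) (hhd2 : Differentiable ℝ (gradient h))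
    (L m M η : ℝ) (hL : 0 < L) (hm : 0 < m) (hmM : m ≤ M)
    (hfL : ∀ x v : X, |⟪(fderiv ℝ (gradient f) x) v, v⟫| ≤ L * ‖v‖ ^ 2)
    (hhm : ∀ x v : X, m * ‖v‖ ^ 2 ≤ ⟪(fderiv ℝ (gradient h) x) v, v⟫)
    (hhM : ∀ x v : X, ⟪(fderiv ℝ (gradient h) x) v, v⟫ ≤ M * ‖v‖ ^ 2)
    (hη : 0 < η) (hη' : η ≤ m ^ 2 / (M * L))
    (xk x1 : X)
    (hopt : ∀ z : X, ⟪gradient f xk, x1⟫ + (1 / η) * bregmanDiv h x1 xk ≤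
      ⟪gradient f xk, z⟫ + (1 / η) * bregmanDiv h z xk) :
    f x1 - f xk ≤ -(η / (2 * M)) * ‖gradient f xk‖ ^ 2 :=
  mirror_descent_progress_general f h hfd hfd2 hhd hhd2 L m M η hL hm hmM hfL hhm hhM hη hη' xk x1
    hopt
end

section
/- Let f : X → ℝ and h : X → ℝ be differentiable, with m·I ⪯ ∇²h ⪯ M·I for 0 < m ≤ M. For any step size η > 0, the proximal Bregman update x_{k+1} = argmin_x { f(x) + (1/η) D_h(x, x_k) } satisfies f(x_{k+1}) - f(x_k) ≤ -(mη/(2M²)) ‖∇f(x_{k+1})‖². -/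
/-! Strong convexity of `h` gives `D_h(x₁, x_k) ≥ (m/2)‖x₁ - x_k‖²`, and comparing the objective at
`x₁` with its value at `x_k` gives `f x₁ - f x_k ≤ -D_h(x₁, x_k)/η`. The Hessian of `h` is symmetric
with quadratic form in `[0, M‖v‖²]`, so its operator norm is at most `M` and `∇h` is `M`-Lipschitz.
Through the first-order condition `η ∇f(x₁) = ∇h(x_k) - ∇h(x₁)` this bounds
`η‖∇f(x₁)‖ ≤ M‖x₁ - x_k‖`, and the three estimates combine to the claim. -/

open Real RealInnerProductSpace

theorem deriv_le_sub_of_secondDeriv_nonneg {φ φ' φ'' : ℝ → ℝ}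
    (hφ : ∀ t, HasDerivAt φ (φ' t) t) (hφ' : ∀ t, HasDerivAt φ' (φ'' t) t)
    (hφ'' : ∀ t, 0 ≤ φ'' t) : φ' 0 ≤ φ 1 - φ 0 := by
  obtain ⟨c, hc, hslope⟩ := exists_hasDerivAt_eq_slope φ φ' zero_lt_one
    (continuous_iff_continuousAt.2 fun t => (hφ t).continuousAt).continuousOn fun t _ => hφ t
  have := monotone_of_hasDerivAt_nonneg hφ' hφ'' hc.1.le
  rwa [hslope, sub_zero, div_one] at this

theorem ContinuousLinearMap.opNorm_le_of_abs_inner_le {E : Type*} [NormedAddCommGroup E]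
    [InnerProductSpace ℝ E] {T : E →L[ℝ] E} (hT : T.IsSymmetric) {C : ℝ} (hC : 0 ≤ C)
    (h : ∀ x, |⟪T x, x⟫| ≤ C * ‖x‖ ^ 2) : ‖T‖ ≤ C := by
  rw [T.norm_eq_iSup_rayleighQuotient hT]
  refine ciSup_le fun x => ?_
  rcases eq_or_ne x 0 with rfl | hx
  · simpa using hC
  · rw [rayleighQuotient, reApplyInnerSelf_apply, abs_div, abs_sq, div_le_iff₀ (by positivity)]
    simpa using h x

section Gradient

variable {X : Type*} [NormedAddCommGroup X] [InnerProductSpace ℝ X] [CompleteSpace X]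

theorem IsLocalMin.hasGradientAt_eq_zero {f : X → ℝ} {a g : X}
    (hmin : IsLocalMin f a) (hf : HasGradientAt f g a) : g = 0 := by
  simpa using hmin.hasFDerivAt_eq_zero (hasGradientAt_iff_hasFDerivAt.mp hf)

theorem hasGradientAt_bregmanDiv {h : X → ℝ} {x : X} (hh : DifferentiableAt ℝ h x) (y : X) :
    HasGradientAt (fun z => bregmanDiv h z y) (gradient h x - gradient h y) x := by
  rw [hasGradientAt_iff_hasFDerivAt, map_sub]
  refine ((hh.hasGradientAt.hasFDerivAt.sub_const (h y)).sub
    (((innerSL ℝ (gradient h y)).hasFDerivAt).sub_const ⟪gradient h y, y⟫)).congr_of_eventuallyEq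
      (Filter.Eventually.of_forall fun z => ?_)
  simp [bregmanDiv, inner_sub_right]

theorem smul_gradient_eq_of_isLocalMin_add_bregmanDiv {f h : X → ℝ} {x y : X} {η : ℝ}
    (hf : DifferentiableAt ℝ f x) (hh : DifferentiableAt ℝ h x) (hη : η ≠ 0)
    (hmin : IsLocalMin (fun z => f z + (1 / η) * bregmanDiv h z y) x) :
    η • gradient f x = gradient h y - gradient h x := by
  have hgrad : HasGradientAt (fun z => f z + (1 / η) * bregmanDiv h z y)
      (gradient f x + (1 / η) • (gradient h x - gradient h y)) x := by
    rw [hasGradientAt_iff_hasFDerivAt, map_add, map_smulₛₗ]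
    exact hf.hasGradientAt.hasFDerivAt.add
      ((hasGradientAt_iff_hasFDerivAt.mp (hasGradientAt_bregmanDiv hh y)).const_mul (1 / η))
  have hzero := congrArg (η • ·) (hmin.hasGradientAt_eq_zero hgrad)
  simp only [smul_add, smul_smul, mul_one_div_cancel hη, one_smul, smul_zero] at hzero
  linear_combination (norm := module) hzero

section Hessian

variable {h : X → ℝ}

theorem isSymmetric_fderiv_gradient (hhd : Differentiable ℝ h) {x : X}
    (hhd2 : DifferentiableAt ℝ (gradient h) x) : (fderiv ℝ (gradient h) x).IsSymmetric := by
  intro u w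
  let D : X →L[ℝ] StrongDual ℝ X :=
    (InnerProductSpace.toDual ℝ X).toContinuousLinearEquiv.toContinuousLinearMap
  have hdual : ∀ y, HasFDerivAt h (D (gradient h y)) y :=
    fun y => (hhd y).hasGradientAt.hasFDerivAt
  have := second_derivative_symmetric hdual (D.hasFDerivAt.comp x hhd2.hasFDerivAt) u w
  simpa [D, real_inner_comm u] using this

theorem norm_gradient_sub_le (hhd : Differentiable ℝ h) (hhd2 : Differentiable ℝ (gradient h))
    {M : ℝ} (hM : 0 ≤ M) (hpos : ∀ x v : X, 0 ≤ ⟪(fderiv ℝ (gradient h) x) v, v⟫)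
    (hhM : ∀ x v : X, ⟪(fderiv ℝ (gradient h) x) v, v⟫ ≤ M * ‖v‖ ^ 2) (x y : X) :
    ‖gradient h x - gradient h y‖ ≤ M * ‖x - y‖ := by
  refine convex_univ.norm_image_sub_le_of_norm_fderiv_le (fun z _ => hhd2 z) (fun z _ => ?_)
    trivial trivial
  refine ContinuousLinearMap.opNorm_le_of_abs_inner_le (isSymmetric_fderiv_gradient hhd (hhd2 z))
    hM fun v => ?_
  exact abs_le.2 ⟨(neg_nonpos.2 (by positivity)).trans (hpos z v), hhM z v⟩

theorem mul_norm_sq_le_bregmanDiv (hhd : Differentiable ℝ h)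
    (hhd2 : Differentiable ℝ (gradient h)) {m : ℝ}
    (hhm : ∀ x v : X, m * ‖v‖ ^ 2 ≤ ⟪(fderiv ℝ (gradient h) x) v, v⟫) (x y : X) :
    m / 2 * ‖x - y‖ ^ 2 ≤ bregmanDiv h x y := by
  -- `t ↦ h (y + t • v) - m / 2 * t ^ 2 * ‖v‖ ^ 2` is convex: tangent at `0` below the chord
  set v := x - y
  have hline (t : ℝ) : HasDerivAt (fun s : ℝ => y + s • v) v t := by
    simpa using ((hasDerivAt_id t).smul_const v).const_add y
  have hφ (t : ℝ) : HasDerivAt (fun s => h (y + s • v) - m / 2 * s ^ 2 * ‖v‖ ^ 2)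
      (⟪gradient h (y + t • v), v⟫ - m * t * ‖v‖ ^ 2) t := by
    rw [inner_gradient_left]
    refine (((hhd _).hasFDerivAt.comp_hasDerivAt t (hline t)).sub
      (((hasDerivAt_pow 2 t).const_mul (m / 2)).mul_const (‖v‖ ^ 2))).congr_deriv ?_
    ring_nf
  have hφ' (t : ℝ) : HasDerivAt (fun s => ⟪gradient h (y + s • v), v⟫ - m * s * ‖v‖ ^ 2)
      (⟪(fderiv ℝ (gradient h) (y + t • v)) v, v⟫ - m * ‖v‖ ^ 2) t := by
    refine ((((hhd2 _).hasFDerivAt.comp_hasDerivAt t (hline t)).inner ℝ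
      (hasDerivAt_const t v)).sub
        (((hasDerivAt_id t).const_mul m).mul_const (‖v‖ ^ 2))).congr_deriv ?_
    simp
  have := deriv_le_sub_of_secondDeriv_nonneg hφ hφ' fun t => sub_nonneg.mpr (hhm _ v)
  simp only [bregmanDiv, v, zero_smul, one_smul, add_zero, add_sub_cancel] at this ⊢
  linarith

end Hessian

end Gradient

theorem proximal_bregman_progress
    {X : Type*} [NormedAddCommGroup X] [InnerProductSpace ℝ X] [FiniteDimensional ℝ X]
    (f h : X → ℝ)
    (hfd : Differentiable ℝ f)
    (hhd : Differentiable ℝ h) (hhd2 : Differentiable ℝ (gradient h))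
    (m M η : ℝ) (hm : 0 < m) (hmM : m ≤ M) (hη : 0 < η)
    (hhm : ∀ x v : X, m * ‖v‖ ^ 2 ≤ ⟪(fderiv ℝ (gradient h) x) v, v⟫)
    (hhM : ∀ x v : X, ⟪(fderiv ℝ (gradient h) x) v, v⟫ ≤ M * ‖v‖ ^ 2)
    (xk x1 : X)
    (hopt : ∀ z : X, f x1 + (1 / η) * bregmanDiv h x1 xk ≤ f z + (1 / η) * bregmanDiv h z xk) :
    f x1 - f xk ≤ -(m * η / (2 * M ^ 2)) * ‖gradient f x1‖ ^ 2 := by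
  have hM : 0 < M := hm.trans_le hmM
  have hdescent : f x1 + (1 / η) * bregmanDiv h x1 xk ≤ f xk := by
    simpa [bregmanDiv] using hopt xk
  have hstrong := mul_norm_sq_le_bregmanDiv hhd hhd2 hhm x1 xk
  have hfirst_order := smul_gradient_eq_of_isLocalMin_add_bregmanDiv (hfd x1) (hhd x1) hη.ne'
    (Filter.Eventually.of_forall hopt)
  have hgrad : η * ‖gradient f x1‖ ≤ M * ‖x1 - xk‖ := by
    calc η * ‖gradient f x1‖ = ‖gradient h xk - gradient h x1‖ := by
          rw [← hfirst_order, norm_smul, Real.norm_of_nonneg hη.le]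
      _ ≤ M * ‖xk - x1‖ := norm_gradient_sub_le hhd hhd2 hM.le
          (fun x v => (by positivity : 0 ≤ m * ‖v‖ ^ 2).trans (hhm x v)) hhM xk x1
      _ = M * ‖x1 - xk‖ := by rw [norm_sub_rev]
  calc f x1 - f xk ≤ -(1 / η * bregmanDiv h x1 xk) := by linarith
    _ ≤ -(1 / η * (m / 2 * ‖x1 - xk‖ ^ 2)) := by gcongr
    _ = -(m / (2 * η * M ^ 2) * (M * ‖x1 - xk‖) ^ 2) := by field_simp
    _ ≤ -(m / (2 * η * M ^ 2) * (η * ‖gradient f x1‖) ^ 2) := by gcongr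
    _ = -(m * η / (2 * M ^ 2)) * ‖gradient f x1‖ ^ 2 := by field_simp
end

section
/- Let f : X → ℝ be p-strongly smooth (with constants L_1,…,L_p, L_1 = 1) for an integer p > 1, and let the step size η satisfy 0 < η^{1/(p-1)} ≤ min{1, 1/(2 Σ_{m=2}^p L_m/m!)}. Then the rescaled gradient descent update x_{k+1} = x_k - η^{1/(p-1)} ∇f(x_k)/‖∇f(x_k)‖^{(p-2)/(p-1)} satisfies f(x_{k+1}) - f(x_k) ≤ -(η^{1/(p-1)}/2) ‖∇f(x_k)‖^{p/(p-1)}. -/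
/-!
Write `g = ∇f(xₖ)`, `t = η^(1/(p-1))` and expand `f` to order `p` along the step
`d = -(t / ‖g‖^((p-2)/(p-1))) • g`, with the Lagrange form of the remainder. The first-order
term is `-t ‖g‖^(p/(p-1))`. By strong smoothness, the length of the step makes the `k`-th order
term at most `L k t^k / k! · ‖g‖^(p/(p-1))` for every `2 ≤ k ≤ p`, and since `t ≤ 1` and
`t ∑ L k / k! ≤ 1/2` these terms add up to at most half of the first-order decrease.
-/

open Real Finset Nat

theorem sum_mul_pow_le_half {s : Finset ℕ} {a : ℕ → ℝ} (ha : ∀ k ∈ s, 0 ≤ a k)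
    (hs : ∀ k ∈ s, 2 ≤ k) {t : ℝ} (ht0 : 0 ≤ t) (ht1 : t ≤ 1)
    (ht : t ≤ 1 / (2 * ∑ k ∈ s, a k)) :
    ∑ k ∈ s, a k * t ^ k ≤ t / 2 := by
  have hS : 0 ≤ ∑ k ∈ s, a k := sum_nonneg ha
  have hpow : ∑ k ∈ s, a k * t ^ k ≤ (∑ k ∈ s, a k) * t ^ 2 := by
    rw [sum_mul]
    exact sum_le_sum fun k hk => mul_le_mul_of_nonneg_left
      (pow_le_pow_of_le_one ht0 ht1 (hs k hk)) (ha k hk)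
  have hSt : (∑ k ∈ s, a k) * t ≤ 1 / 2 := by
    rcases hS.eq_or_lt with hS0 | hSpos
    · rw [← hS0]; norm_num
    · calc (∑ k ∈ s, a k) * t
          ≤ (∑ k ∈ s, a k) * (1 / (2 * ∑ k ∈ s, a k)) := by gcongr
        _ = 1 / 2 := by field_simp
  nlinarith

-- The reason for the exponents in strong smoothness: along the rescaled step
-- `-(t / r ^ ((q - 2) / (q - 1))) • g`, `r = ‖g‖`, every order-`k` bound
-- `r ^ (k + (q - k) / (q - 1))` becomes `t ^ k * r ^ (q / (q - 1))`.
theorem rescaled_step_pow_mul_rpow {q r : ℝ} (hq : q ≠ 1) (hr : 0 < r) (t : ℝ) (k : ℕ) :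
    (t / r ^ ((q - 2) / (q - 1))) ^ k * r ^ (k + (q - k) / (q - 1)) =
      t ^ k * r ^ (q / (q - 1)) := by
  have hq1 : q - 1 ≠ 0 := sub_ne_zero.mpr hq
  have hexp : (k + (q - k) / (q - 1)) - (q - 2) / (q - 1) * k = q / (q - 1) := by
    field_simp; ring
  rw [div_pow, ← rpow_natCast (r ^ _) k, ← rpow_mul hr.le, div_mul_eq_mul_div, mul_div_assoc,
    ← rpow_sub hr, hexp]

section

variable {E F : Type*} [NormedAddCommGroup E] [NormedSpace ℝ E]
  [NormedAddCommGroup F] [NormedSpace ℝ F]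

theorem ContinuousMultilinearMap.map_smul_univ_const {k : ℕ}
    (M : ContinuousMultilinearMap ℝ (fun _ : Fin k => E) F) (a : ℝ) (v : E) :
    M (fun _ => a • v) = a ^ k • M (fun _ => v) := by
  simpa using M.map_smul_univ (fun _ => a) (fun _ => v)

theorem iteratedDeriv_comp_add_smul {n : ℕ} {f : E → F} (hf : ContDiff ℝ n f) (x d : E)
    (t : ℝ) :
    iteratedDeriv n (fun s : ℝ => f (x + s • d)) t
      = iteratedFDeriv ℝ n f (x + t • d) (fun _ => d) := by
  let ℓ : ℝ →L[ℝ] E := (ContinuousLinearMap.id ℝ ℝ).smulRight d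
  have hshift : ContDiff ℝ n (fun z => f (x + z)) := hf.comp (contDiff_const.add contDiff_id)
  have hcomp : (fun s : ℝ => f (x + s • d)) = (fun z => f (x + z)) ∘ ℓ := rfl
  rw [iteratedDeriv_eq_iteratedFDeriv, hcomp, ℓ.iteratedFDeriv_comp_right hshift t le_rfl,
    ContinuousMultilinearMap.compContinuousLinearMap_apply, iteratedFDeriv_comp_add_left]
  simp [ℓ]

theorem exists_eq_taylor_add_lagrange_segment {n : ℕ} {f : E → ℝ}
    (hf : ContDiff ℝ (n + 1) f) (x d : E) :
    ∃ ξ ∈ Set.Ioo (0 : ℝ) 1, f (x + d) =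
      ∑ k ∈ range (n + 1), iteratedFDeriv ℝ k f x (fun _ => d) / k ! +
        iteratedFDeriv ℝ (n + 1) f (x + ξ • d) (fun _ => d) / (n + 1)! := by
  have hG : ContDiff ℝ (n + 1) (fun t : ℝ => f (x + t • d)) := by fun_prop
  obtain ⟨ξ, hξ, h⟩ :=
    taylor_mean_remainder_lagrange_iteratedDeriv (zero_ne_one' ℝ) hG.contDiffOn
  rw [Set.uIoo_of_le zero_le_one] at hξ
  refine ⟨ξ, hξ, ?_⟩
  rw [taylor_within_apply, Set.uIcc_of_le zero_le_one] at h
  have hcoeff : ∀ k ∈ range (n + 1), ((k ! : ℝ)⁻¹ * (1 - 0) ^ k) •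
      iteratedDerivWithin k (fun t : ℝ => f (x + t • d)) (Set.Icc 0 1) 0 =
      iteratedFDeriv ℝ k f x (fun _ => d) / k ! := by
    intro k hk
    have hkn : (k : WithTop ℕ∞) ≤ n + 1 := by exact_mod_cast (mem_range.mp hk).le
    rw [iteratedDerivWithin_eq_iteratedDeriv (uniqueDiffOn_Icc zero_lt_one)
      (hG.contDiffAt.of_le hkn) (Set.left_mem_Icc.mpr zero_le_one),
      iteratedDeriv_comp_add_smul (hf.of_le hkn)]
    simp [div_eq_inv_mul]
  rw [sum_congr rfl hcoeff, iteratedDeriv_comp_add_smul hf] at h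
  simp only [one_smul, sub_zero, one_pow, mul_one] at h
  linarith

theorem sub_le_fderiv_add_sum_of_iteratedFDeriv_le {p : ℕ} (hp : 1 < p) {f : E → ℝ}
    (hf : ContDiff ℝ p f) (x d : E) (B : ℕ → ℝ)
    (hB : ∀ k ∈ Ico 2 p, iteratedFDeriv ℝ k f x (fun _ => d) ≤ B k)
    (hBp : ∀ y, iteratedFDeriv ℝ p f y (fun _ => d) ≤ B p) :
    f (x + d) - f x ≤ fderiv ℝ f x d + ∑ k ∈ Icc 2 p, B k / k ! := by
  obtain ⟨n, rfl⟩ : ∃ n, p = n + 1 := ⟨p - 1, by omega⟩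
  obtain ⟨ξ, -, htaylor⟩ := exists_eq_taylor_add_lagrange_segment (by exact_mod_cast hf) x d
  rw [range_eq_Ico, sum_eq_sum_Ico_succ_bot (by omega), sum_eq_sum_Ico_succ_bot (by omega),
    iteratedFDeriv_zero_apply, iteratedFDeriv_one_apply] at htaylor
  rw [← Ico_add_one_right_eq_Icc, sum_Ico_succ_top (by omega : 2 ≤ n + 1), htaylor]
  have hmid : ∑ k ∈ Ico 2 (n + 1), iteratedFDeriv ℝ k f x (fun _ => d) / k !
      ≤ ∑ k ∈ Ico 2 (n + 1), B k / k ! :=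
    sum_le_sum fun k hk => div_le_div_of_nonneg_right (hB k hk) k !.cast_nonneg
  have hlast := div_le_div_of_nonneg_right (hBp (x + ξ • d)) (n + 1)!.cast_nonneg
  simp only [zero_add, factorial_zero, factorial_one, Nat.cast_one, div_one] at htaylor ⊢
  linarith

noncomputable def rescaledStep (q t : ℝ) (g : E) : E :=
  -(t / ‖g‖ ^ ((q - 2) / (q - 1))) • g

theorem ContinuousMultilinearMap.map_rescaledStep_le {k : ℕ}
    (M : ContinuousMultilinearMap ℝ (fun _ : Fin k => E) ℝ)
    {q t C : ℝ} (hq : q ≠ 1) (ht : 0 ≤ t) {g : E} (hg : 0 < ‖g‖)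
    (hM : |M (fun _ => g)| ≤ C * ‖g‖ ^ ((k : ℝ) + (q - k) / (q - 1))) :
    M (fun _ => rescaledStep q t g) ≤ C * t ^ k * ‖g‖ ^ (q / (q - 1)) := by
  set c := t / ‖g‖ ^ ((q - 2) / (q - 1))
  have hc : 0 ≤ c := by positivity
  rw [rescaledStep, map_smul_univ_const, smul_eq_mul]
  calc _ ≤ |(-c) ^ k * M (fun _ => g)| := le_abs_self _
    _ = c ^ k * |M (fun _ => g)| := by rw [abs_mul, abs_pow, abs_neg, abs_of_nonneg hc]
    _ ≤ c ^ k * (C * ‖g‖ ^ ((k : ℝ) + (q - k) / (q - 1))) := by gcongr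
    _ = C * t ^ k * ‖g‖ ^ (q / (q - 1)) := by
        rw [mul_left_comm, rescaled_step_pow_mul_rpow hq hg, mul_assoc]

end

theorem inner_rescaledStep {E : Type*} [NormedAddCommGroup E] [InnerProductSpace ℝ E]
    {q : ℝ} (hq : q ≠ 1) (t : ℝ) {g : E} (hg : 0 < ‖g‖) :
    inner ℝ g (rescaledStep q t g) = -(t * ‖g‖ ^ (q / (q - 1))) := by
  have htwo : ((1 : ℕ) : ℝ) + (q - (1 : ℕ)) / (q - 1) = (2 : ℕ) := by
    rw [Nat.cast_one, div_self (sub_ne_zero.mpr hq)]; norm_num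
  rw [rescaledStep, inner_smul_right, real_inner_self_eq_norm_sq, ← pow_one t,
    ← rescaled_step_pow_mul_rpow hq hg t 1, htwo, rpow_natCast]
  ring

theorem rescaled_gradient_descent_progress_general
    {X : Type*} [NormedAddCommGroup X] [InnerProductSpace ℝ X] [FiniteDimensional ℝ X]
    (p : ℕ) (hp : 1 < p) (f : X → ℝ) (hf : ContDiff ℝ p f)
    (L : ℕ → ℝ) (hLpos : ∀ i, 0 < L i)
    (hss : ∀ x : X, ∀ m : ℕ, 1 ≤ m → m ≤ p - 1 →
      |iteratedFDeriv ℝ m f x (fun _ => gradient f x)| ≤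
        L m * ‖gradient f x‖ ^ ((m : ℝ) + ((p : ℝ) - m) / ((p : ℝ) - 1)))
    (hssp : ∀ (x v : X), |iteratedFDeriv ℝ p f x (fun _ => v)| ≤ L p * ‖v‖ ^ (p : ℝ))
    (η : ℝ) (hη : 0 < η ^ (1 / ((p : ℝ) - 1)))
    (hη' : η ^ (1 / ((p : ℝ) - 1)) ≤
      min 1 (1 / (2 * ∑ m ∈ Finset.Icc 2 p, L m / (m.factorial : ℝ))))
    (xk x1 : X)
    (hupd0 : gradient f xk = 0 → x1 = xk)
    (hupd : gradient f xk ≠ 0 → x1 = xk - (η ^ (1 / ((p : ℝ) - 1)) /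
      ‖gradient f xk‖ ^ (((p : ℝ) - 2) / ((p : ℝ) - 1))) • gradient f xk) :
    f x1 - f xk ≤ -(η ^ (1 / ((p : ℝ) - 1)) / 2) *
      ‖gradient f xk‖ ^ ((p : ℝ) / ((p : ℝ) - 1)) := by
  have hp1 : (p : ℝ) ≠ 1 := by exact_mod_cast hp.ne'
  set t := η ^ (1 / ((p : ℝ) - 1))
  by_cases hg : gradient f xk = 0
  · rw [hupd0 hg, hg, sub_self, norm_zero,
      zero_rpow (div_ne_zero (by positivity) (sub_ne_zero.mpr hp1)), mul_zero]
  set g := gradient f xk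
  set P := (p : ℝ) / ((p : ℝ) - 1)
  have hr : 0 < ‖g‖ := norm_pos_iff.mpr hg
  have hx1 : x1 = xk + rescaledStep p t g := by
    rw [hupd hg, rescaledStep, neg_smul, sub_eq_add_neg]
  have hmid (k : ℕ) (hk : k ∈ Ico 2 p) :=
    (iteratedFDeriv ℝ k f xk).map_rescaledStep_le hp1 hη.le hr
      (hss xk k (by grind) (by grind))
  have hlast (y : X) := (iteratedFDeriv ℝ p f y).map_rescaledStep_le hp1 hη.le hr
    (by rw [sub_self, zero_div, add_zero]; exact hssp y g)
  have hsum : ∑ k ∈ Icc 2 p, L k / k ! * t ^ k ≤ t / 2 :=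
    sum_mul_pow_le_half (fun k _ => div_nonneg (hLpos k).le k !.cast_nonneg)
      (fun k hk => (mem_Icc.mp hk).1) hη.le (hη'.trans (min_le_left _ _))
      (hη'.trans (min_le_right _ _))
  calc f x1 - f xk
      ≤ fderiv ℝ f xk (rescaledStep p t g) +
          ∑ k ∈ Icc 2 p, L k * t ^ k * ‖g‖ ^ P / k ! :=
        hx1 ▸ sub_le_fderiv_add_sum_of_iteratedFDeriv_le hp hf xk _ _ hmid hlast
    _ = -(t * ‖g‖ ^ P) + (∑ k ∈ Icc 2 p, L k / k ! * t ^ k) * ‖g‖ ^ P := by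
        rw [← inner_gradient_left, inner_rescaledStep hp1 t hr, sum_mul]
        exact congrArg _ (sum_congr rfl fun k _ => by ring)
    _ ≤ -(t * ‖g‖ ^ P) + t / 2 * ‖g‖ ^ P := by gcongr
    _ = -(t / 2) * ‖g‖ ^ P := by ring

theorem rescaled_gradient_descent_progress
    {X : Type*} [NormedAddCommGroup X] [InnerProductSpace ℝ X] [FiniteDimensional ℝ X]
    (p : ℕ) (hp : 1 < p) (f : X → ℝ) (hf : ContDiff ℝ p f)
    (L : ℕ → ℝ) (hLpos : ∀ i, 0 < L i) (hL1 : L 1 = 1)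
    (hss : ∀ x : X, ∀ m : ℕ, 1 ≤ m → m ≤ p - 1 →
      |iteratedFDeriv ℝ m f x (fun _ => gradient f x)| ≤
        L m * ‖gradient f x‖ ^ ((m : ℝ) + ((p : ℝ) - m) / ((p : ℝ) - 1)))
    (hssp : ∀ (x v : X), |iteratedFDeriv ℝ p f x (fun _ => v)| ≤ L p * ‖v‖ ^ (p : ℝ))
    (η : ℝ) (hη : 0 < η ^ (1 / ((p : ℝ) - 1)))
    (hη' : η ^ (1 / ((p : ℝ) - 1)) ≤
      min 1 (1 / (2 * ∑ m ∈ Finset.Icc 2 p, L m / (m.factorial : ℝ))))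
    (xk x1 : X)
    (hupd0 : gradient f xk = 0 → x1 = xk)
    (hupd : gradient f xk ≠ 0 → x1 = xk - (η ^ (1 / ((p : ℝ) - 1)) /
      ‖gradient f xk‖ ^ (((p : ℝ) - 2) / ((p : ℝ) - 1))) • gradient f xk) :
    f x1 - f xk ≤ -(η ^ (1 / ((p : ℝ) - 1)) / 2) *
      ‖gradient f xk‖ ^ ((p : ℝ) / ((p : ℝ) - 1)) :=
  rescaled_gradient_descent_progress_general p hp f hf L hLpos hss hssp η hη hη' xk x1 hupd0 hupd
end

section
/- The function f(x) = (1/p)‖x‖_p^p = (1/p) Σ_{i=1}^d |x_i|^p on ℝ^d, for an integer p ≥ 2, is strongly smooth of order p with constants L_m = (p-1)(p-2)⋯(p-m+1): for each 2 ≤ m ≤ p-1 and every unit vector v ∈ ℝ^d (Euclidean norm), |∇^m f(x)(v,…,v)| ≤ (p-1)⋯(p-m+1) · ‖∇f(x)‖_2^{(p-m)/(p-1)}, where ‖∇f(x)‖_2 = ‖x‖_{2p-2}^{p-1}. -/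
/-!
Since `f` is a sum of one-variable functions,
`∇^m f(x)(v, …, v) = ∑ᵢ c_m sign(xᵢ)^p xᵢ^(p-m) vᵢ^m` with `c_m = (p-1)⋯(p-m+1)`, and
`∇f(x) = (sign(xᵢ)^p xᵢ^(p-1))ᵢ` has Euclidean norm `‖x‖_{2p-2}^(p-1)`. Hölder's inequality with
exponents `(2p-2)/(p-m)` and `(2p-2)/(p+m-2)` bounds `∑ᵢ |xᵢ|^(p-m) |vᵢ|^m` by `‖x‖_{2p-2}^(p-m)`
times a power of the `ℓ^s` norm of `v` for some `s ≥ 2`, which is at most `‖v‖₂ = 1`.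
-/

open Real Finset

lemma prod_range_succ_sub_eq_mul_prod_Icc (a : ℝ) (k : ℕ) :
    ∏ j ∈ range (k + 1), (a - j) = a * ∏ j ∈ Icc 1 k, (a - j) := by
  rw [prod_range_succ', mul_comm, ← Ico_add_one_right_eq_Icc, prod_Ico_eq_prod_range]
  simp [add_comm]

/-- `sign t ^ e * t ^ n` for `1 ≤ n`, split by the parity of `e` so that its smoothness is
visible. -/
noncomputable def signPow (e n : ℕ) (t : ℝ) : ℝ :=
  if Even e then t ^ n else |t| * t ^ (n - 1)

section signPow

variable {e n : ℕ}

lemma abs_signPow (hn : 1 ≤ n) (t : ℝ) : |signPow e n t| = |t| ^ n := by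
  unfold signPow
  split_ifs
  · exact abs_pow t n
  · rw [abs_mul, abs_abs, abs_pow, ← pow_succ', Nat.sub_add_cancel hn]

lemma signPow_self (p : ℕ) (t : ℝ) : signPow p p t = |t| ^ p := by
  unfold signPow
  split_ifs with hp
  · exact (hp.pow_abs t).symm
  · obtain ⟨k, rfl⟩ := Nat.not_even_iff_odd.1 hp
    rw [Nat.add_sub_cancel, ← (even_two_mul k).pow_abs, ← pow_succ']

lemma hasDerivAt_abs_mul_pow (hn : 1 ≤ n) (t : ℝ) :
    HasDerivAt (fun s : ℝ => |s| * s ^ n) ((n + 1) * (|t| * t ^ (n - 1))) t := by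
  rcases eq_or_ne t 0 with rfl | ht
  · -- `|s| * s ^ n` is dominated by `s ^ (n + 1)`, which is `o(s)` at `0`
    have hsmall : (fun s : ℝ => |s| * s ^ n) =o[nhds 0] fun s => s :=
      (Asymptotics.isBigO_of_le _ fun s => by simp [pow_succ']).trans_isLittleO
        (Asymptotics.isLittleO_pow_id (n := n + 1) (by omega))
    simpa [hasDerivAt_iff_isLittleO_nhds_zero, zero_pow (by omega : n ≠ 0)] using hsmall
  · have hpow : t ^ n = t * t ^ (n - 1) := by rw [← pow_succ', Nat.sub_add_cancel hn]
    refine ((hasDerivAt_abs ht).mul (hasDerivAt_pow n t)).congr_deriv ?_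
    rw [hpow, ← mul_assoc, ← mul_assoc, sign_mul_self]
    ring

lemma hasDerivAt_signPow (hn : 2 ≤ n) (t : ℝ) :
    HasDerivAt (signPow e n) (n * signPow e (n - 1) t) t := by
  unfold signPow
  split_ifs
  · simpa using hasDerivAt_pow n t
  · have h := hasDerivAt_abs_mul_pow (n := n - 1) (by omega) t
    rwa [Nat.cast_sub (by omega), Nat.cast_one, sub_add_cancel, Nat.sub_sub] at h

lemma contDiff_signPow {k : ℕ} (hk : k < n) : ContDiff ℝ k (signPow e n) := by
  induction k generalizing n with
  | zero =>
    refine contDiff_zero.2 ?_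
    unfold signPow
    split_ifs <;> fun_prop
  | succ k ih =>
    rw [Nat.cast_succ, contDiff_succ_iff_deriv]
    have hderiv : deriv (signPow e n) = fun t => n * signPow e (n - 1) t :=
      funext fun t => (hasDerivAt_signPow (by omega) t).deriv
    refine ⟨fun t => (hasDerivAt_signPow (by omega) t).differentiableAt, by simp, ?_⟩
    rw [hderiv]
    exact contDiff_const.mul (ih (by omega))

lemma iteratedDeriv_signPow {k : ℕ} (hk : k < n) :
    iteratedDeriv k (signPow e n) =
      fun t => (∏ j ∈ range k, ((n : ℝ) - j)) * signPow e (n - k) t := by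
  induction k with
  | zero => simp
  | succ k ih =>
    funext t
    rw [iteratedDeriv_succ, ih (by omega), prod_range_succ, ← Nat.sub_sub,
      ((hasDerivAt_signPow (by omega) t).const_mul _).deriv, Nat.cast_sub (by omega)]
    ring

end signPow

section Separable

variable {ι : Type*} [Fintype ι] {g : ℝ → ℝ}

lemma iteratedFDeriv_comp_clm_apply_diag {E : Type*} [NormedAddCommGroup E] [NormedSpace ℝ E]
    {m : ℕ} (hg : ContDiff ℝ m g) (ℓ : E →L[ℝ] ℝ) (x v : E) :
    iteratedFDeriv ℝ m (g ∘ ℓ) x (fun _ => v) = iteratedDeriv m g (ℓ x) * ℓ v ^ m := by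
  rw [ℓ.iteratedFDeriv_comp_right hg x le_rfl,
    ContinuousMultilinearMap.compContinuousLinearMap_apply,
    iteratedFDeriv_apply_eq_iteratedDeriv_mul_prod]
  simp [smul_eq_mul, mul_comm]

lemma iteratedFDeriv_sum_comp_apply_diag {m : ℕ} (hg : ContDiff ℝ m g)
    (x v : EuclideanSpace ℝ ι) :
    iteratedFDeriv ℝ m (fun y : EuclideanSpace ℝ ι => ∑ i, g (y i)) x (fun _ => v) =
      ∑ i, iteratedDeriv m g (x i) * v i ^ m := by
  have hcoord (i : ι) : ContDiff ℝ m (g ∘ EuclideanSpace.proj (𝕜 := ℝ) i) :=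
    hg.comp (EuclideanSpace.proj (𝕜 := ℝ) i).contDiff
  rw [iteratedFDeriv_sum (f := fun i (y : EuclideanSpace ℝ ι) => g (y i)) fun i _ => hcoord i,
    Finset.sum_apply, _root_.sum_apply]
  exact sum_congr rfl fun i _ => iteratedFDeriv_comp_clm_apply_diag hg (EuclideanSpace.proj i) x v

lemma gradient_sum_comp (hg : Differentiable ℝ g) (x : EuclideanSpace ℝ ι) :
    gradient (fun y : EuclideanSpace ℝ ι => ∑ i, g (y i)) x =
      WithLp.toLp 2 fun i => deriv g (x i) := by
  refine HasGradientAt.gradient (hasGradientAt_iff_hasFDerivAt.2 ?_)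
  have hcoord (i : ι) : HasFDerivAt (fun y : EuclideanSpace ℝ ι => g (y i))
      (deriv g (x i) • EuclideanSpace.proj (𝕜 := ℝ) i) x :=
    (hg (x i)).hasDerivAt.comp_hasFDerivAt x (EuclideanSpace.proj (𝕜 := ℝ) i).hasFDerivAt
  refine (HasFDerivAt.fun_sum fun i _ => hcoord i).congr_fderiv ?_
  ext w
  simp [PiLp.inner_apply, mul_comm]

end Separable

section Holder

variable {ι : Type*} [Fintype ι]

lemma sum_abs_rpow_le_one {v : EuclideanSpace ℝ ι} (hv : ‖v‖ ≤ 1) {s : ℝ} (hs : 2 ≤ s) :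
    ∑ i, |v i| ^ s ≤ 1 := by
  have hsq : ∑ i, |v i| ^ (2 : ℝ) ≤ 1 := by
    simpa [EuclideanSpace.norm_sq_eq, rpow_two] using pow_le_one₀ (norm_nonneg v) hv (n := 2)
  refine le_trans (sum_le_sum fun i _ => ?_) hsq
  exact rpow_le_rpow_of_exponent_ge' (abs_nonneg _) ((PiLp.norm_apply_le v i).trans hv)
    (by linarith) hs

lemma sum_abs_pow_mul_abs_pow_le {p m : ℕ} (hm : 1 ≤ m) (hmp : m < p) (a : ι → ℝ)
    {v : EuclideanSpace ℝ ι} (hv : ‖v‖ ≤ 1) :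
    ∑ i, |a i| ^ (p - m) * |v i| ^ m ≤
      (∑ i, |a i| ^ (2 * (p : ℝ) - 2)) ^ (((p : ℝ) - m) / (2 * p - 2)) := by
  have hmR : (1 : ℝ) ≤ m := by exact_mod_cast hm
  have hmpR : (m : ℝ) + 1 ≤ p := by exact_mod_cast hmp
  have hpm : (0 : ℝ) < p - m := by linarith
  have hpm2 : (0 : ℝ) < p + m - 2 := by linarith
  set r : ℝ := (2 * p - 2) / (p - m)
  set q : ℝ := (2 * p - 2) / (p + m - 2)
  have hrq : r.HolderConjugate q := by
    refine holderConjugate_iff.2 ⟨(one_lt_div hpm).2 (by linarith), ?_⟩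
    rw [inv_div, inv_div, ← add_div, div_eq_one_iff_eq (by linarith)]
    ring
  have habs_pow (t : ℝ) (k : ℕ) (s : ℝ) : (|t| ^ k) ^ s = |t| ^ (k * s) := by
    rw [← rpow_natCast, ← rpow_mul (abs_nonneg t)]
  -- `m q ≥ 2` amounts to `(m - 1) (p - 2) ≥ 0`
  have hmq : 2 ≤ m * q := by
    rw [← mul_div_assoc, le_div_iff₀ hpm2]
    nlinarith [mul_nonneg (sub_nonneg.2 hmR) (by linarith : (0 : ℝ) ≤ p - 2)]
  calc ∑ i, |a i| ^ (p - m) * |v i| ^ m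
      ≤ (∑ i, (|a i| ^ (p - m)) ^ r) ^ (1 / r) * (∑ i, (|v i| ^ m) ^ q) ^ (1 / q) :=
        inner_le_Lp_mul_Lq_of_nonneg univ hrq (fun i _ => by positivity) fun i _ => by positivity
    _ = (∑ i, |a i| ^ (2 * (p : ℝ) - 2)) ^ (((p : ℝ) - m) / (2 * p - 2)) *
          (∑ i, |v i| ^ (m * q)) ^ (1 / q) := by
        simp only [habs_pow, Nat.cast_sub hmp.le, r]
        rw [mul_div_cancel₀ _ hpm.ne', one_div_div]
    _ ≤ (∑ i, |a i| ^ (2 * (p : ℝ) - 2)) ^ (((p : ℝ) - m) / (2 * p - 2)) * 1 := by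
        gcongr
        exact rpow_le_one (by positivity) (sum_abs_rpow_le_one hv hmq)
          (one_div_nonneg.2 (div_pos (by linarith) hpm2).le)
    _ = _ := mul_one _

lemma abs_sum_signPow_mul_pow_le {p m : ℕ} (hm : 1 ≤ m) (hmp : m < p) (x : ι → ℝ)
    {v : EuclideanSpace ℝ ι} (hv : ‖v‖ ≤ 1) :
    |∑ i, signPow p (p - m) (x i) * v i ^ m| ≤
      (∑ i, |x i| ^ (2 * (p : ℝ) - 2)) ^ (((p : ℝ) - m) / (2 * p - 2)) :=
  calc |∑ i, signPow p (p - m) (x i) * v i ^ m|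
      ≤ ∑ i, |signPow p (p - m) (x i) * v i ^ m| := abs_sum_le_sum_abs _ _
    _ = ∑ i, |x i| ^ (p - m) * |v i| ^ m := by
        simp only [abs_mul, abs_signPow (Nat.sub_pos_of_lt hmp), abs_pow]
    _ ≤ _ := sum_abs_pow_mul_abs_pow_le hm hmp x hv

end Holder

section AbsPow

variable {ι : Type*} [Fintype ι] {p : ℕ}

lemma contDiff_abs_pow_div {m : ℕ} (hmp : m < p) : ContDiff ℝ m fun t : ℝ => |t| ^ p / p := by
  simpa only [← signPow_self] using (contDiff_signPow hmp).div_const (p : ℝ)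

lemma iteratedDeriv_abs_pow_div {m : ℕ} (hm : 1 ≤ m) (hmp : m < p) :
    iteratedDeriv m (fun t : ℝ => |t| ^ p / p) =
      fun t => (∏ j ∈ Icc 1 (m - 1), ((p : ℝ) - j)) * signPow p (p - m) t := by
  have hp : (p : ℝ) ≠ 0 := Nat.cast_ne_zero.2 (by omega)
  funext t
  simp_rw [div_eq_inv_mul, ← signPow_self]
  rw [iteratedDeriv_const_mul _ (contDiff_signPow hmp).contDiffAt, iteratedDeriv_signPow hmp]
  obtain ⟨k, rfl⟩ := Nat.exists_eq_add_of_le' hm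
  rw [prod_range_succ_sub_eq_mul_prod_Icc, Nat.add_sub_cancel]
  field_simp

lemma deriv_abs_pow_div (hp : 2 ≤ p) : deriv (fun t : ℝ => |t| ^ p / p) = signPow p (p - 1) := by
  simpa using iteratedDeriv_abs_pow_div le_rfl hp

lemma norm_gradient_sum_abs_pow_div (hp : 2 ≤ p) (x : EuclideanSpace ℝ ι) :
    ‖gradient (fun y : EuclideanSpace ℝ ι => ∑ i, |y i| ^ p / (p : ℝ)) x‖ =
      (∑ i, |x i| ^ (2 * (p : ℝ) - 2)) ^ (1 / 2 : ℝ) := by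
  rw [gradient_sum_comp ((contDiff_abs_pow_div (m := 1) hp).differentiable one_ne_zero),
    deriv_abs_pow_div hp, EuclideanSpace.norm_eq, sqrt_eq_rpow]
  congr 1
  refine sum_congr rfl fun i _ => ?_
  rw [PiLp.toLp_apply, norm_eq_abs, abs_signPow (by omega), ← pow_mul, ← rpow_natCast]
  push_cast [Nat.cast_sub (by omega : 1 ≤ p)]
  ring_nf

lemma iteratedFDeriv_sum_abs_pow_div_apply_diag {m : ℕ} (hm : 1 ≤ m) (hmp : m < p)
    (x v : EuclideanSpace ℝ ι) :
    iteratedFDeriv ℝ m (fun y : EuclideanSpace ℝ ι => ∑ i, |y i| ^ p / (p : ℝ)) x (fun _ => v) =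
      (∏ j ∈ Icc 1 (m - 1), ((p : ℝ) - j)) * ∑ i, signPow p (p - m) (x i) * v i ^ m := by
  rw [iteratedFDeriv_sum_comp_apply_diag (contDiff_abs_pow_div hmp),
    iteratedDeriv_abs_pow_div hm hmp, mul_sum]
  simp only [mul_assoc]

end AbsPow

theorem lp_power_loss_strongly_smooth
    (d p : ℕ) (hp : 2 ≤ p)
    (f : EuclideanSpace ℝ (Fin d) → ℝ)
    (hfdef : ∀ x : EuclideanSpace ℝ (Fin d), f x = (1 / (p : ℝ)) * ∑ i, |x i| ^ (p : ℝ)) :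
    ∀ x : EuclideanSpace ℝ (Fin d),
      ‖gradient f x‖ =
        (∑ i, |x i| ^ (2 * (p : ℝ) - 2)) ^ (((p : ℝ) - 1) / (2 * (p : ℝ) - 2)) ∧
      ∀ m : ℕ, 2 ≤ m → m ≤ p - 1 → ∀ v : EuclideanSpace ℝ (Fin d), ‖v‖ = 1 →
        |iteratedFDeriv ℝ m f x (fun _ => v)| ≤
          (∏ j ∈ Finset.Icc 1 (m - 1), ((p : ℝ) - j)) *
            ‖gradient f x‖ ^ (((p : ℝ) - (m : ℝ)) / ((p : ℝ) - 1)) := by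
  intro x
  have hpR : (2 : ℝ) ≤ p := by exact_mod_cast hp
  have hf : f = fun y : EuclideanSpace ℝ (Fin d) => ∑ i, |y i| ^ p / (p : ℝ) := by
    funext y
    simp only [hfdef, mul_sum, rpow_natCast, one_div_mul_eq_div]
  set S := ∑ i, |x i| ^ (2 * (p : ℝ) - 2)
  have hgrad : ‖gradient f x‖ = S ^ (1 / 2 : ℝ) := hf ▸ norm_gradient_sum_abs_pow_div hp x
  refine ⟨?_, fun m hm hmp v hv => ?_⟩
  · rw [hgrad]
    congr 1
    rw [div_eq_div_iff (by norm_num) (by linarith)]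
    ring
  have hexp : 1 / 2 * (((p : ℝ) - m) / (p - 1)) = ((p : ℝ) - m) / (2 * p - 2) := by
    field_simp
  have hmp' : m < p := by omega
  have hL : 0 ≤ ∏ j ∈ Icc 1 (m - 1), ((p : ℝ) - j) :=
    prod_nonneg fun j hj => sub_nonneg.2 (by exact_mod_cast (by grind : j ≤ p))
  rw [hgrad, ← rpow_mul (by positivity), hexp, hf,
    iteratedFDeriv_sum_abs_pow_div_apply_diag (by omega) hmp', abs_mul, abs_of_nonneg hL]
  exact mul_le_mul_of_nonneg_left (abs_sum_signPow_mul_pow_le (by omega) hmp' _ hv.le) hL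
end
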